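/- arXiv:2302.06022 — 2 statements merged into one kernel-verified Lean document; each statement's English description precedes it below -/
import Mathlib

section
/- Let R be a commutative ring with sfli R < ∞ (the supremum of flat dimensions of injective R-modules is finite) and let G be a group. Then every projectively coresolved Gorenstein flat (PGF) RG-module is PGF as an R-module. -/
universe u v

open Function

section NCTensor

variable (S : Type u) [Ring S]

/-- The balancing relations for the tensor product `I ⊗_S M` of a right `S`-module `I`
with a left `S`-module `M`, inside `I ⊗_ℤ M`. -/
def ncRel (I : Type u) [AddCommGroup I] [Module Sᵐᵒᵖ I]
    (M : Type u) [AddCommGroup M] [Module S M] : Submodule ℤ (TensorProduct ℤ I M) :=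
  Submodule.span ℤ {z | ∃ (x : I) (s : S) (m : M),
    z = (MulOpposite.op s • x) ⊗ₜ[ℤ] m - x ⊗ₜ[ℤ] (s • m)}

/-- The tensor product `I ⊗_S M` of a right `S`-module `I` with a left `S`-module `M`
(as an abelian group). -/
def NCT (I : Type u) [AddCommGroup I] [Module Sᵐᵒᵖ I]
    (M : Type u) [AddCommGroup M] [Module S M] : Type u :=
  TensorProduct ℤ I M ⧸ ncRel S I M

noncomputable instance (I : Type u) [AddCommGroup I] [Module Sᵐᵒᵖ I]
    (M : Type u) [AddCommGroup M] [Module S M] : AddCommGroup (NCT S I M) :=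
  inferInstanceAs (AddCommGroup (TensorProduct ℤ I M ⧸ ncRel S I M))

/-- The map `I ⊗_S M → I ⊗_S N` induced by an `S`-linear map `f : M → N`. -/
noncomputable def nctMap (I : Type u) [AddCommGroup I] [Module Sᵐᵒᵖ I]
    {M N : Type u} [AddCommGroup M] [Module S M] [AddCommGroup N] [Module S N]
    (f : M →ₗ[S] N) : NCT S I M →ₗ[ℤ] NCT S I N :=
  Submodule.mapQ _ _ (LinearMap.lTensor I f.toAddMonoidHom.toIntLinearMap) (by
    apply Submodule.span_le.2
    rintro z ⟨x, s, m, rfl⟩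
    have hmem : (LinearMap.lTensor I f.toAddMonoidHom.toIntLinearMap)
        ((MulOpposite.op s • x) ⊗ₜ[ℤ] m - x ⊗ₜ[ℤ] (s • m)) ∈ ncRel S I N := by
      rw [map_sub, LinearMap.lTensor_tmul, LinearMap.lTensor_tmul]
      have h2 : f.toAddMonoidHom.toIntLinearMap (s • m) = s • f m := f.map_smul s m
      rw [h2]
      exact Submodule.subset_span ⟨x, s, f m, rfl⟩
    exact hmem)

end NCTensor

section Complexes

variable (S : Type u) [Ring S]

/-- A `ℤ`-indexed sequence of `S`-modules with maps `X (n+1) → X n`. -/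
structure ZComplex where
  X : ℤ → Type u
  [addX : ∀ n, AddCommGroup (X n)]
  [modX : ∀ n, Module S (X n)]
  d : ∀ n : ℤ, X (n + 1) →ₗ[S] X n

attribute [instance] ZComplex.addX ZComplex.modX

/-- `M` is a projectively coresolved Gorenstein flat (PGF) `S`-module: a syzygy of an acyclic
complex of projective `S`-modules which remains acyclic after tensoring with every injective
right `S`-module. -/
def IsPGF (M : Type u) [AddCommGroup M] [Module S M] : Prop :=
  ∃ P : ZComplex S,
    (∀ n, Module.Projective S (P.X n)) ∧
    (∀ n, Function.Exact (P.d (n + 1)) (P.d n)) ∧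
    (∀ (I : Type u) [AddCommGroup I] [Module Sᵐᵒᵖ I], Module.Injective Sᵐᵒᵖ I →
      ∀ n, Function.Exact (nctMap S I (P.d (n + 1))) (nctMap S I (P.d n))) ∧
    Nonempty ((LinearMap.range (P.d 0)) ≃ₗ[S] M)

/-- `M` is a Gorenstein projective `S`-module: a syzygy of an acyclic complex of projective
`S`-modules which stays acyclic under `Hom_S(-, Q)` for every projective `S`-module `Q`. -/
def IsGorensteinProjective (M : Type u) [AddCommGroup M] [Module S M] : Prop :=
  ∃ P : ZComplex S,
    (∀ n, Module.Projective S (P.X n)) ∧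
    (∀ n, Function.Exact (P.d (n + 1)) (P.d n)) ∧
    (∀ (Q : Type u) [AddCommGroup Q] [Module S Q], Module.Projective S Q →
      ∀ n, Function.Exact (fun φ : P.X n →ₗ[S] Q => φ.comp (P.d n))
        (fun ψ : P.X (n + 1) →ₗ[S] Q => ψ.comp (P.d (n + 1)))) ∧
    Nonempty ((LinearMap.range (P.d 0)) ≃ₗ[S] M)

/-- A (left) resolution of the `S`-module `M`. -/
structure NatRes (M : Type u) [AddCommGroup M] [Module S M] where
  F : ℕ → Type u
  [addF : ∀ n, AddCommGroup (F n)]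
  [modF : ∀ n, Module S (F n)]
  d : ∀ n : ℕ, F (n + 1) →ₗ[S] F n
  aug : F 0 →ₗ[S] M
  surj : Function.Surjective aug
  exact0 : Function.Exact (d 0) aug
  exact : ∀ n, Function.Exact (d (n + 1)) (d n)

attribute [instance] NatRes.addF NatRes.modF

/-- A class of `S`-modules. -/
def ModClass : Type (u + 1) :=
  ∀ (N : Type u) [AddCommGroup N] [Module S N], Prop

/-- `M` admits a resolution of length at most `n` by modules in the class `C`. -/
def HasResLen (C : ModClass S) (M : Type u) [AddCommGroup M] [Module S M] (n : ℕ) : Prop :=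
  ∃ ρ : NatRes S M, (∀ i, C (ρ.F i)) ∧ ∀ i, n < i → ∀ x : ρ.F i, x = 0

/-- The resolution dimension of `M` with respect to the class `C`, as an element of `ℕ∞`. -/
noncomputable def classDim (C : ModClass S) (M : Type u) [AddCommGroup M] [Module S M] : ℕ∞ :=
  sInf {e : ℕ∞ | ∃ n : ℕ, e = n ∧ HasResLen S C M n}

/-- The class of projective `S`-modules. -/
def projClass : ModClass S := fun N _ _ => Module.Projective S N

/-- The class of PGF `S`-modules. -/
def pgfClass : ModClass S := fun N _ _ => IsPGF S N

/-- The projective dimension of `M` as an element of `ℕ∞`. -/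
noncomputable def projDim (M : Type u) [AddCommGroup M] [Module S M] : ℕ∞ :=
  classDim S (projClass S) M

/-- The PGF dimension of `M` as an element of `ℕ∞`. -/
noncomputable def pgfDim (M : Type u) [AddCommGroup M] [Module S M] : ℕ∞ :=
  classDim S (pgfClass S) M

/-- A bundled injective `S`-module. -/
structure InjMod where
  carrier : Type u
  [addC : AddCommGroup carrier]
  [modC : Module S carrier]
  inj : Module.Injective S carrier

attribute [instance] InjMod.addC InjMod.modC

/-- `spli S`: the supremum of the projective dimensions of injective `S`-modules. -/
noncomputable def spli : ℕ∞ :=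
  sSup (Set.range fun I : InjMod S => projDim S I.carrier)

end Complexes

section Sfli

variable (R : Type u) [CommRing R]

/-- The class of flat `R`-modules. -/
def flatClass : ModClass R := fun N _ _ => Module.Flat R N

/-- The flat dimension of `M` as an element of `ℕ∞`. -/
noncomputable def flatDim (M : Type u) [AddCommGroup M] [Module R M] : ℕ∞ :=
  classDim R (flatClass R) M

/-- `sfli R`: the supremum of the flat dimensions of injective `R`-modules. -/
noncomputable def sfli : ℕ∞ :=
  sSup (Set.range fun I : InjMod R => flatDim R I.carrier)

end Sfli

section Trivial

variable (R : Type u) [CommRing R] (G : Type u) [Group G]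

/-- The augmentation `R`-algebra map `R[G] → R`. -/
noncomputable def augmentation : MonoidAlgebra R G →ₐ[R] R :=
  MonoidAlgebra.lift R R G 1

end Trivial

/-- The trivial `R[G]`-module `R`. -/
def Triv (R : Type u) (G : Type u) : Type u := R

section Trivial2

variable (R : Type u) [CommRing R] (G : Type u) [Group G]

instance : AddCommGroup (Triv R G) := inferInstanceAs (AddCommGroup R)

instance : Module R (Triv R G) := inferInstanceAs (Module R R)

noncomputable instance : Module (MonoidAlgebra R G) (Triv R G) :=
  Module.compHom R (augmentation R G).toRingHom

instance : IsScalarTower R (MonoidAlgebra R G) (Triv R G) :=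
  ⟨fun r x m => by
    show (augmentation R G) (r • x) • m = r • ((augmentation R G) x • m)
    rw [map_smul]
    exact mul_smul r ((augmentation R G) x) m⟩

/-- The PGF dimension of the group `G` over `R`: the PGF dimension of the trivial
`R[G]`-module `R`. -/
noncomputable def pgfGroupDim : ℕ∞ :=
  pgfDim (MonoidAlgebra R G) (Triv R G)

end Trivial2



/-!
Restricting along `R → R[G]` keeps a complete resolution of `M` acyclic and projective, since
`R[G]` is free over `R`; the tensor condition is then recovered over `R` from `sfli R < ∞` alone.
An injective `R`-module `I` has a finite flat resolution, and tensoring an acyclic complex of flat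
modules with a module of finite flat dimension keeps it acyclic, by dimension shifting along
`0 → K → F → I → 0` with `F` flat. Hence over such `R` every syzygy of an acyclic complex of
projectives is PGF. For commutative `R`, a right `R`-module is an `R`-module and the balanced
tensor product `NCT` is the ordinary one.
-/

open MulOpposite TensorProduct LinearMap

theorem Module.Projective.trans (R S N : Type*) [CommSemiring R] [Semiring S] [Algebra R S]
    [AddCommMonoid N] [Module R N] [Module S N] [IsScalarTower R S N]
    [Module.Projective R S] [Module.Projective S N] : Module.Projective R N := by
  classical
  obtain ⟨i, hi⟩ := ‹Module.Projective S N›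
  have : Module.Projective R (N →₀ S) := .of_equiv (finsuppLequivDFinsupp R).symm
  exact .of_split (i.restrictScalars R)
    ((Finsupp.linearCombination S id).restrictScalars R) (LinearMap.ext hi)

attribute [local instance] RingHomInvPair.of_ringEquiv in
theorem Module.Injective.of_isCentralScalar {R : Type u} [CommRing R] {I : Type u}
    [AddCommGroup I] [Module Rᵐᵒᵖ I] [Module R I] [IsCentralScalar R I]
    [Module.Injective Rᵐᵒᵖ I] : Module.Injective R I :=
  .of_ringEquiv (RingEquiv.toOpposite R).symm
    { AddEquiv.refl I with map_smul' := fun r x => op_smul_eq_smul (unop r) x }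

def IsSyzygyOfAcyclicProjective (S : Type u) [Ring S] (M : Type u) [AddCommGroup M]
    [Module S M] : Prop :=
  ∃ P : ZComplex S, (∀ n, Module.Projective S (P.X n)) ∧ (∀ n, Exact (P.d (n + 1)) (P.d n)) ∧
    Nonempty (range (P.d 0) ≃ₗ[S] M)

theorem IsPGF.isSyzygyOfAcyclicProjective {S : Type u} [Ring S] {M : Type u} [AddCommGroup M]
    [Module S M] : IsPGF S M → IsSyzygyOfAcyclicProjective S M :=
  fun ⟨P, hproj, hexact, _, e⟩ => ⟨P, hproj, hexact, e⟩

theorem IsSyzygyOfAcyclicProjective.restrictScalars (R : Type u) [CommRing R] {S : Type u}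
    [Ring S] [Algebra R S] [Module.Projective R S] {M : Type u} [AddCommGroup M] [Module R M]
    [Module S M] [IsScalarTower R S M] (h : IsSyzygyOfAcyclicProjective S M) :
    IsSyzygyOfAcyclicProjective R M := by
  obtain ⟨P, hproj, hexact, ⟨e⟩⟩ := h
  let _ (n : ℤ) : Module R (P.X n) := Module.compHom _ (algebraMap R S)
  have (n : ℤ) : IsScalarTower R S (P.X n) :=
    ⟨fun r s x => by rw [Algebra.smul_def, mul_smul]; rfl⟩
  refine ⟨⟨P.X, fun n => (P.d n).restrictScalars R⟩, fun n => .trans R S (P.X n), hexact, ⟨?_⟩⟩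
  exact (LinearEquiv.ofEq _ _ (range_restrictScalars (P.d 0))).trans
    (((Submodule.restrictScalarsEquiv R S _ _).restrictScalars R).trans (e.restrictScalars R))

section CentralTensor

variable (R : Type u) [CommRing R] (I : Type u) [AddCommGroup I] [Module Rᵐᵒᵖ I] [Module R I]
  [IsCentralScalar R I]

theorem ncRel_eq_ker (M : Type u) [AddCommGroup M] [Module R M] :
    ncRel R I M = ker ((mapOfCompatibleSMul R ℤ R I M).restrictScalars ℤ) := by
  rw [ker_restrictScalars, AlgebraTensorModule.ker_mapOfCompatibleSMul]
  let N : Submodule R (I ⊗[ℤ] M) :=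
    { ncRel R I M with
      smul_mem' := fun r z hz => by
        induction hz using Submodule.span_induction with
        | mem z hz =>
          obtain ⟨x, s, m, rfl⟩ := hz
          refine Submodule.subset_span ⟨r • x, s, m, ?_⟩
          simp only [smul_sub, smul_tmul', op_smul_eq_smul, smul_comm r s]
        | zero => rw [smul_zero]; exact (ncRel R I M).zero_mem
        | add x y _ _ hx hy => simpa [smul_add] using add_mem hx hy
        | smul n z _ hz => simpa [smul_comm r n] using (ncRel R I M).smul_mem n hz }
  apply le_antisymm
  · refine Submodule.span_le.2 ?_
    rintro _ ⟨x, s, m, rfl⟩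
    exact Submodule.subset_span ⟨s, x, m, by rw [op_smul_eq_smul]⟩
  · refine (Submodule.span_le (p := N)).2 ?_
    rintro _ ⟨a, x, m, rfl⟩
    exact Submodule.subset_span ⟨x, a, m, by rw [op_smul_eq_smul]⟩

noncomputable def nctEquivTensorProduct (M : Type u) [AddCommGroup M] [Module R M] :
    NCT R I M ≃ₗ[ℤ] I ⊗[R] M :=
  (Submodule.quotEquivOfEq _ _ (ncRel_eq_ker R I M)).trans
    (LinearMap.quotKerEquivOfSurjective _ (mapOfCompatibleSMul_surjective R ℤ R I M))

theorem nctEquivTensorProduct_comp_nctMap {M N : Type u} [AddCommGroup M] [Module R M]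
    [AddCommGroup N] [Module R N] (f : M →ₗ[R] N) :
    (nctEquivTensorProduct R I N : NCT R I N →ₗ[ℤ] I ⊗[R] N) ∘ₗ nctMap R I f =
      (lTensor I f).restrictScalars ℤ ∘ₗ
        (nctEquivTensorProduct R I M : NCT R I M →ₗ[ℤ] I ⊗[R] M) := by
  apply Submodule.linearMap_qext
  exact TensorProduct.ext' fun _ _ => rfl

theorem exact_nctMap_iff {M N P : Type u} [AddCommGroup M] [Module R M]
    [AddCommGroup N] [Module R N] [AddCommGroup P] [Module R P] (f : M →ₗ[R] N)
    (g : N →ₗ[R] P) :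
    Exact (nctMap R I f) (nctMap R I g) ↔ Exact (lTensor I f) (lTensor I g) :=
  (Exact.iff_of_ladder_linearEquiv (nctEquivTensorProduct_comp_nctMap R I f).symm
    (nctEquivTensorProduct_comp_nctMap R I g).symm).symm

end CentralTensor

section Resolutions

variable {S : Type u} [Ring S] {M : Type u} [AddCommGroup M] [Module S M]

theorem exists_hasResLen_of_classDim_lt_top {C : ModClass S} (h : classDim S C M < ⊤) :
    ∃ n, HasResLen S C M n := by
  obtain ⟨_, ⟨n, rfl, hn⟩, -⟩ := sInf_lt_iff.1 h
  exact ⟨n, hn⟩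

namespace NatRes

def syzygy (ρ : NatRes S M) : NatRes S (range (ρ.d 0)) where
  F i := ρ.F (i + 1)
  d i := ρ.d (i + 1)
  aug := (ρ.d 0).rangeRestrict
  surj := (ρ.d 0).surjective_rangeRestrict
  exact0 := exact_iff.2 ((ker_rangeRestrict _).trans (ρ.exact 0).linearMap_ker_eq)
  exact i := ρ.exact (i + 1)

theorem exact_subtype_aug (ρ : NatRes S M) : Exact (range (ρ.d 0)).subtype ρ.aug :=
  exact_iff.2 (ρ.exact0.linearMap_ker_eq.trans (Submodule.range_subtype _).symm)

noncomputable def augEquiv (ρ : NatRes S M) (h : ∀ x : ρ.F 1, x = 0) : ρ.F 0 ≃ₗ[S] M :=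
  LinearEquiv.ofBijective ρ.aug ⟨fun x y hxy => by
    rw [← sub_eq_zero, ← map_sub, ρ.exact0] at hxy
    obtain ⟨z, hz⟩ := hxy
    rw [← sub_eq_zero, ← hz, h z, map_zero], ρ.surj⟩

end NatRes

end Resolutions

section FlatDimension

variable {R : Type u} [CommRing R]

theorem rTensor_lTensor_comm_apply {M N P Q : Type*} [AddCommGroup M] [Module R M]
    [AddCommGroup N] [Module R N] [AddCommGroup P] [Module R P] [AddCommGroup Q] [Module R Q]
    (f : M →ₗ[R] P) (g : N →ₗ[R] Q) (x : M ⊗[R] N) :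
    rTensor Q f (lTensor M g x) = lTensor P g (rTensor N f x) := by
  rw [← LinearMap.comp_apply, rTensor_comp_lTensor, ← lTensor_comp_rTensor, LinearMap.comp_apply]

theorem exact_lTensor_of_shortExact {K F W X₀ X₁ X₂ X₃ : Type*}
    [AddCommGroup K] [Module R K] [AddCommGroup F] [Module R F] [AddCommGroup W] [Module R W]
    [AddCommGroup X₀] [Module R X₀] [AddCommGroup X₁] [Module R X₁]
    [AddCommGroup X₂] [Module R X₂] [AddCommGroup X₃] [Module R X₃]
    [Module.Flat R F] [Module.Flat R X₀]
    {ι : K →ₗ[R] F} {π : F →ₗ[R] W} (hι : Injective ι) (hπ : Surjective π) (hιπ : Exact ι π)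
    {f : X₃ →ₗ[R] X₂} {g : X₂ →ₗ[R] X₁} {h : X₁ →ₗ[R] X₀} (hfg : Exact f g) (hgh : h ∘ₗ g = 0)
    (hK : Exact (lTensor K g) (lTensor K h)) :
    Exact (lTensor W f) (lTensor W g) := by
  refine fun t => ⟨fun ht => ?_, ?_⟩
  · obtain ⟨b, rfl⟩ := rTensor_surjective X₂ hπ t
    have hb : rTensor X₁ π (lTensor F g b) = 0 := by rwa [rTensor_lTensor_comm_apply]
    obtain ⟨a, ha⟩ := (rTensor_exact X₁ hιπ hπ _).1 hb
    have ha₀ : lTensor K h a = 0 := by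
      apply Module.Flat.rTensor_preserves_injective_linearMap (M := X₀) ι hι
      rw [map_zero, rTensor_lTensor_comm_apply, ha, ← LinearMap.comp_apply, ← lTensor_comp, hgh,
        lTensor_zero, LinearMap.zero_apply]
    obtain ⟨a', rfl⟩ := (hK a).1 ha₀
    -- correcting `b` by the image of `a'` gives a cycle of the acyclic complex `F ⊗ X`
    have hb' : lTensor F g (b - rTensor X₂ ι a') = 0 := by
      rw [map_sub, ← rTensor_lTensor_comm_apply, ha, sub_self]
    obtain ⟨c, hc⟩ := (Module.Flat.lTensor_exact F hfg _).1 hb'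
    refine ⟨rTensor X₃ π c, ?_⟩
    rw [← rTensor_lTensor_comm_apply, hc, map_sub, ← LinearMap.comp_apply (rTensor X₂ π),
      ← rTensor_comp, hιπ.linearMap_comp_eq_zero, rTensor_zero, LinearMap.zero_apply, sub_zero]
  · rintro ⟨u, rfl⟩
    rw [← LinearMap.comp_apply, ← lTensor_comp, hfg.linearMap_comp_eq_zero, lTensor_zero,
      LinearMap.zero_apply]

theorem exact_lTensor_of_hasResLen {P : ZComplex R} (hX : ∀ n, Module.Flat R (P.X n))
    (hP : ∀ n, Exact (P.d (n + 1)) (P.d n)) {W : Type u} [AddCommGroup W] [Module R W] {k : ℕ}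
    (hW : HasResLen R (flatClass R) W k) (n : ℤ) :
    Exact (lTensor W (P.d (n + 1))) (lTensor W (P.d n)) := by
  obtain ⟨ρ, hflat, hvan⟩ := hW
  induction k generalizing W n with
  | zero =>
    have : Module.Flat R (ρ.F 0) := hflat 0
    have := Module.Flat.of_linearEquiv (ρ.augEquiv (hvan 1 one_pos)).symm
    exact Module.Flat.lTensor_exact W (hP n)
  | succ k ih =>
    obtain ⟨m, rfl⟩ : ∃ m, n = m + 1 := ⟨n - 1, by omega⟩
    have : Module.Flat R (ρ.F 0) := hflat 0
    have := hX m
    exact exact_lTensor_of_shortExact (Submodule.injective_subtype _) ρ.surj ρ.exact_subtype_aug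
      (hP (m + 1)) (hP m).linearMap_comp_eq_zero
      (ih m ρ.syzygy (fun i => hflat (i + 1)) (fun i hi => hvan (i + 1) (by omega)))

theorem flatDim_le_sfli (I : Type u) [AddCommGroup I] [Module R I] [hI : Module.Injective R I] :
    flatDim R I ≤ sfli R :=
  le_sSup ⟨⟨I, hI⟩, rfl⟩

end FlatDimension

theorem IsSyzygyOfAcyclicProjective.isPGF {R : Type u} [CommRing R] (hsfli : sfli R < ⊤)
    {M : Type u} [AddCommGroup M] [Module R M] (h : IsSyzygyOfAcyclicProjective R M) :
    IsPGF R M := by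
  obtain ⟨P, hproj, hexact, e⟩ := h
  refine ⟨P, hproj, hexact, fun I _ _ hI n => ?_, e⟩
  let _ : Module R I := Module.compHom I (RingEquiv.toOpposite R).toRingHom
  have : IsCentralScalar R I := ⟨fun _ _ => rfl⟩
  have : Module.Injective R I := Module.Injective.of_isCentralScalar
  obtain ⟨k, hk⟩ := exists_hasResLen_of_classDim_lt_top ((flatDim_le_sfli I).trans_lt hsfli)
  exact (exact_nctMap_iff R I _ _).2
    (exact_lTensor_of_hasResLen (fun n => have := hproj n; inferInstance) hexact hk n)

/-- Over a commutative ring `R` with `sfli R < ∞`, every PGF module over the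
group ring `R[G]` is PGF as an `R`-module (via restriction of scalars). -/
theorem pgf_restriction_of_sfli_lt_top (R : Type u) [CommRing R] (G : Type u) [Group G]
    (hsfli : sfli R < ⊤)
    (M : Type u) [AddCommGroup M] [Module R M] [Module (MonoidAlgebra R G) M]
    [IsScalarTower R (MonoidAlgebra R G) M]
    (hM : IsPGF (MonoidAlgebra R G) M) :
    IsPGF R M :=
  (hM.isSyzygyOfAcyclicProjective.restrictScalars R).isPGF hsfli
end

section
/- Let R be a commutative ring, G a group, and H ≤ G a subgroup. For every PGF RH-module M, the induced RG-module Ind_H^G M = RG ⊗_{RH} M is PGF; consequently PGF-dim_{RG}(Ind_H^G M) ≤ PGF-dim_{RH}(M) for every RH-module M. -/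
universe u v

open Function

/-- The balancing relations for the induced module `R[G] ⊗_{R[H]} M`. -/
noncomputable def indRel (R : Type u) [CommRing R] (G : Type u) [Group G] (H : Subgroup G)
    (M : Type u) [AddCommGroup M] [Module R M] [Module (MonoidAlgebra R (↥H)) M]
    [IsScalarTower R (MonoidAlgebra R (↥H)) M] :
    Submodule (MonoidAlgebra R G) (TensorProduct R (MonoidAlgebra R G) M) :=
  Submodule.span (MonoidAlgebra R G)
    {z | ∃ (h : H) (m : M),
      z = (MonoidAlgebra.of R G (h : G)) ⊗ₜ[R] m - 1 ⊗ₜ[R] ((MonoidAlgebra.of R (↥H) h) • m)}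

/-- The induced `R[G]`-module `Ind_H^G M = R[G] ⊗_{R[H]} M`. -/
def Ind (R : Type u) [CommRing R] (G : Type u) [Group G] (H : Subgroup G)
    (M : Type u) [AddCommGroup M] [Module R M] [Module (MonoidAlgebra R (↥H)) M]
    [IsScalarTower R (MonoidAlgebra R (↥H)) M] : Type u :=
  TensorProduct R (MonoidAlgebra R G) M ⧸ indRel R G H M

noncomputable instance (R : Type u) [CommRing R] (G : Type u) [Group G] (H : Subgroup G)
    (M : Type u) [AddCommGroup M] [Module R M] [Module (MonoidAlgebra R (↥H)) M]
    [IsScalarTower R (MonoidAlgebra R (↥H)) M] : AddCommGroup (Ind R G H M) :=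
  inferInstanceAs (AddCommGroup (TensorProduct R (MonoidAlgebra R G) M ⧸ indRel R G H M))

noncomputable instance (R : Type u) [CommRing R] (G : Type u) [Group G] (H : Subgroup G)
    (M : Type u) [AddCommGroup M] [Module R M] [Module (MonoidAlgebra R (↥H)) M]
    [IsScalarTower R (MonoidAlgebra R (↥H)) M] :
    Module (MonoidAlgebra R G) (Ind R G H M) :=
  inferInstanceAs (Module (MonoidAlgebra R G)
    (TensorProduct R (MonoidAlgebra R G) M ⧸ indRel R G H M))

attribute [reducible] Ind NCT

section IndAux

variable (R : Type u) [CommRing R] (G : Type u) [Group G] (H : Subgroup G)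

/-- The inclusion ring hom `R[H] →+* R[G]`. -/
noncomputable def iotaB : MonoidAlgebra R (↥H) →+* MonoidAlgebra R G :=
  MonoidAlgebra.mapDomainRingHom R H.subtype

lemma iotaB_single (h : ↥H) (r : R) :
    iotaB R G H (MonoidAlgebra.single h r) = MonoidAlgebra.single (↑h : G) r := by
  simp [iotaB, MonoidAlgebra.mapDomainRingHom, Finsupp.mapDomain_single]

lemma iotaB_of (h : ↥H) :
    iotaB R G H (MonoidAlgebra.of R (↥H) h) = MonoidAlgebra.of R G (↑h : G) := by
  simpa [MonoidAlgebra.of_apply] using iotaB_single R G H h 1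

lemma iotaB_algebraMap (r : R) :
    iotaB R G H (algebraMap R (MonoidAlgebra R (↥H)) r) = algebraMap R (MonoidAlgebra R G) r := by
  simpa [MonoidAlgebra.coe_algebraMap] using iotaB_single R G H 1 r

variable {M : Type u} [AddCommGroup M] [Module R M] [Module (MonoidAlgebra R (↥H)) M]
  [IsScalarTower R (MonoidAlgebra R (↥H)) M]

lemma ind_mk_rel (x : MonoidAlgebra R G) (h : ↥H) (m : M) :
    Submodule.Quotient.mk (p := indRel R G H M) ((x * MonoidAlgebra.of R G (↑h : G)) ⊗ₜ[R] m)
      = Submodule.Quotient.mk ((x ⊗ₜ[R] ((MonoidAlgebra.of R (↥H) h) • m))) := by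
  rw [← sub_eq_zero, ← Submodule.Quotient.mk_sub, Submodule.Quotient.mk_eq_zero]
  have : (x * MonoidAlgebra.of R G (↑h : G)) ⊗ₜ[R] m - x ⊗ₜ[R] ((MonoidAlgebra.of R (↥H) h) • m)
      = x • ((MonoidAlgebra.of R G (↑h : G)) ⊗ₜ[R] m
        - 1 ⊗ₜ[R] ((MonoidAlgebra.of R (↥H) h) • m)) := by
    rw [smul_sub, TensorProduct.smul_tmul', TensorProduct.smul_tmul', smul_eq_mul, smul_eq_mul,
      mul_one]
  rw [this]
  exact Submodule.smul_mem _ _ (Submodule.subset_span ⟨h, m, rfl⟩)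

lemma ind_mk_rel' (x : MonoidAlgebra R G) (b : MonoidAlgebra R (↥H)) (m : M) :
    Submodule.Quotient.mk (p := indRel R G H M) ((x * iotaB R G H b) ⊗ₜ[R] m)
      = Submodule.Quotient.mk ((x ⊗ₜ[R] (b • m))) := by
  induction b using MonoidAlgebra.induction_linear with
  | zero => simp
  | add f g hf hg =>
    rw [map_add, mul_add, TensorProduct.add_tmul, add_smul, TensorProduct.tmul_add,
      Submodule.Quotient.mk_add, Submodule.Quotient.mk_add, hf, hg]
  | single h r =>
    have h1 : (MonoidAlgebra.single h r : MonoidAlgebra R (↥H)) = r • MonoidAlgebra.of R (↥H) h := by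
      simp [MonoidAlgebra.of_apply, Finsupp.smul_single]
    rw [iotaB_single]
    have h2 : (MonoidAlgebra.single (↑h : G) r : MonoidAlgebra R G)
        = r • MonoidAlgebra.of R G (↑h : G) := by
      simp [MonoidAlgebra.of_apply, Finsupp.smul_single]
    have e1 : x * MonoidAlgebra.single (↑h : G) r
        = r • (x * MonoidAlgebra.of R G (↑h : G)) := by rw [h2, mul_smul_comm]
    have e2 : (MonoidAlgebra.single h r : MonoidAlgebra R (↥H)) • m
        = r • ((MonoidAlgebra.of R (↥H) h) • m) := by rw [h1, smul_assoc]
    calc Submodule.Quotient.mk (p := indRel R G H M) ((x * MonoidAlgebra.single (↑h : G) r) ⊗ₜ[R] m)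
        = Submodule.Quotient.mk ((r • (x * MonoidAlgebra.of R G (↑h : G))) ⊗ₜ[R] m) := by rw [e1]
      _ = Submodule.Quotient.mk ((x * MonoidAlgebra.of R G (↑h : G)) ⊗ₜ[R] (r • m)) := by
            rw [TensorProduct.smul_tmul]
      _ = Submodule.Quotient.mk (x ⊗ₜ[R] ((MonoidAlgebra.of R (↥H) h) • (r • m))) :=
            ind_mk_rel R G H x h (r • m)
      _ = Submodule.Quotient.mk (x ⊗ₜ[R] (r • ((MonoidAlgebra.of R (↥H) h) • m))) := by
            rw [smul_comm]
      _ = Submodule.Quotient.mk (x ⊗ₜ[R] ((MonoidAlgebra.single h r : MonoidAlgebra R (↥H)) • m)) := by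
            rw [e2]

end IndAux
section Coset

variable (G : Type u) [Group G] (H : Subgroup G)

/-- The `H`-component of `g` relative to the chosen coset representatives. -/
noncomputable def rhoH (g : G) : ↥H :=
  ⟨(QuotientGroup.mk g : G ⧸ H).out⁻¹ * g, by
    have h1 : (QuotientGroup.mk ((QuotientGroup.mk g : G ⧸ H).out) : G ⧸ H)
        = QuotientGroup.mk g := QuotientGroup.out_eq' _
    exact (QuotientGroup.eq.1 h1)⟩

lemma mk_mul_coe (g : G) (h : ↥H) :
    (QuotientGroup.mk (g * ↑h) : G ⧸ H) = QuotientGroup.mk g := by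
  rw [QuotientGroup.eq]
  have : (g * (↑h : G))⁻¹ * g = (↑h : G)⁻¹ := by group
  rw [this]
  exact inv_mem h.2

lemma rhoH_mul (g : G) (h : ↥H) : rhoH G H (g * ↑h) = rhoH G H g * h := by
  apply Subtype.ext
  show ((QuotientGroup.mk (g * ↑h) : G ⧸ H).out)⁻¹ * (g * ↑h)
      = ((QuotientGroup.mk g : G ⧸ H).out)⁻¹ * g * ↑h
  rw [mk_mul_coe, mul_assoc]

lemma out_mul_rhoH (g : G) : (QuotientGroup.mk g : G ⧸ H).out * ↑(rhoH G H g) = g := by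
  show (QuotientGroup.mk g : G ⧸ H).out * ((QuotientGroup.mk g : G ⧸ H).out⁻¹ * g) = g
  rw [← mul_assoc, mul_inv_cancel, one_mul]

lemma rhoH_out (q : G ⧸ H) : rhoH G H q.out = 1 := by
  apply Subtype.ext
  show ((QuotientGroup.mk q.out : G ⧸ H).out)⁻¹ * q.out = 1
  rw [QuotientGroup.out_eq', inv_mul_cancel]

lemma mk_out (q : G ⧸ H) : (QuotientGroup.mk q.out : G ⧸ H) = q := QuotientGroup.out_eq' _

end Coset

section EInd

variable (R : Type u) [CommRing R] (G : Type u) [Group G] (H : Subgroup G)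
variable (M : Type u) [AddCommGroup M] [Module R M] [Module (MonoidAlgebra R (↥H)) M]
  [IsScalarTower R (MonoidAlgebra R (↥H)) M]

/-- Auxiliary bilinear-type map for `eInd`. -/
noncomputable def eAux : MonoidAlgebra R G →+ (M →+ ((G ⧸ H) →₀ M)) :=
  Finsupp.liftAddHom (fun g => AddMonoidHom.mk'
    (fun r => AddMonoidHom.mk'
      (fun m => Finsupp.single (QuotientGroup.mk g)
        (r • ((MonoidAlgebra.of R (↥H) (rhoH G H g)) • m)))
      (by intro m n; simp [smul_add, Finsupp.single_add]))
    (by intro r s; ext m; simp [add_smul, Finsupp.single_add])) |>.comp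
    MonoidAlgebra.coeffAddEquiv.toAddMonoidHom

lemma eAux_single (g : G) (r : R) (m : M) :
    eAux R G H M (MonoidAlgebra.single g r) m
      = Finsupp.single (QuotientGroup.mk g)
          (r • ((MonoidAlgebra.of R (↥H) (rhoH G H g)) • m)) := by
  unfold eAux
  erw [Finsupp.liftAddHom_apply_single]
  rfl

/-- The underlying map on the tensor product. -/
noncomputable def eTens : TensorProduct R (MonoidAlgebra R G) M →+ ((G ⧸ H) →₀ M) :=
  TensorProduct.liftAddHom (eAux R G H M) (by
    intro r a m
    induction a using MonoidAlgebra.induction_linear with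
    | zero => simp
    | add f g hf hg => rw [smul_add, map_add, map_add]; simp [hf, hg]
    | single g r' =>
      rw [MonoidAlgebra.smul_single, smul_eq_mul, eAux_single, eAux_single]
      congr 1
      rw [mul_comm, mul_smul, smul_comm r])

lemma eTens_tmul (y : MonoidAlgebra R G) (m : M) :
    eTens R G H M (y ⊗ₜ[R] m) = eAux R G H M y m := TensorProduct.liftAddHom_tmul _ _ _ _

lemma eTens_rel : ∀ z ∈ indRel R G H M, eTens R G H M z = 0 := by
  have key : ∀ (x : MonoidAlgebra R G) (h : ↥H) (m : M),
      eAux R G H M (x * MonoidAlgebra.of R G (↑h : G)) m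
        = eAux R G H M x ((MonoidAlgebra.of R (↥H) h) • m) := by
    intro x h m
    induction x using MonoidAlgebra.induction_linear with
    | zero => simp
    | add f g hf hg =>
      rw [add_mul, map_add, map_add]
      simp only [AddMonoidHom.add_apply, hf, hg]
    | single g r =>
      rw [MonoidAlgebra.of_apply, MonoidAlgebra.single_mul_single, mul_one,
        eAux_single, eAux_single]
      rw [mk_mul_coe, rhoH_mul, map_mul, mul_smul]
  have main : ∀ z ∈ indRel R G H M, ∀ x : MonoidAlgebra R G, eTens R G H M (x • z) = 0 := by
    intro z hz
    induction hz using Submodule.span_induction with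
    | mem z hzz =>
      obtain ⟨h, m, rfl⟩ := hzz
      intro x
      rw [smul_sub, TensorProduct.smul_tmul', TensorProduct.smul_tmul', map_sub,
        eTens_tmul, eTens_tmul, smul_eq_mul, smul_eq_mul, mul_one, key]
      exact sub_self _
    | zero => intro x; rw [smul_zero, map_zero]
    | add z w _ _ hz hw => intro x; rw [smul_add, map_add, hz, hw, add_zero]
    | smul c z _ hz => intro x; rw [smul_smul]; exact hz _
  intro z hz
  simpa using main z hz 1

/-- The comparison map `Ind M →+ (G/H →₀ M)`. -/
noncomputable def eInd : Ind R G H M →+ ((G ⧸ H) →₀ M) :=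
  QuotientAddGroup.lift (indRel R G H M).toAddSubgroup (eTens R G H M)
    (fun z hz => eTens_rel R G H M z hz)

lemma eInd_mk (t : TensorProduct R (MonoidAlgebra R G) M) :
    eInd R G H M (Submodule.Quotient.mk t) = eTens R G H M t := rfl

/-- The inverse comparison map. -/
noncomputable def psiInd : ((G ⧸ H) →₀ M) →+ Ind R G H M :=
  Finsupp.liftAddHom (fun q => AddMonoidHom.mk'
    (fun m => Submodule.Quotient.mk ((MonoidAlgebra.of R G q.out) ⊗ₜ[R] m))
    (by intro m n; simp [TensorProduct.tmul_add, Submodule.Quotient.mk_add]))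

lemma psiInd_single (q : G ⧸ H) (m : M) :
    psiInd R G H M (Finsupp.single q m)
      = Submodule.Quotient.mk ((MonoidAlgebra.of R G q.out) ⊗ₜ[R] m) := by
  unfold psiInd
  erw [Finsupp.liftAddHom_apply_single]
  rfl

/-- Induction principle for elements of `Ind M`. -/
lemma ind_induction {P : Ind R G H M → Prop} (zero : P 0)
    (tmul : ∀ (g : G) (r : R) (m : M),
      P (Submodule.Quotient.mk ((MonoidAlgebra.single g r) ⊗ₜ[R] m)))
    (add : ∀ z w, P z → P w → P (z + w)) : ∀ z, P z := by
  intro z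
  obtain ⟨t, rfl⟩ := Submodule.Quotient.mk_surjective _ z
  induction t using TensorProduct.induction_on with
  | zero => simpa using zero
  | tmul y m =>
    induction y using MonoidAlgebra.induction_linear with
    | zero => simpa [TensorProduct.zero_tmul] using zero
    | add f g hf hg =>
      rw [TensorProduct.add_tmul, Submodule.Quotient.mk_add]; exact add _ _ hf hg
    | single g r => exact tmul g r m
  | add t s ht hs => rw [Submodule.Quotient.mk_add]; exact add _ _ ht hs

lemma ind_hom_ext {T : Type v} [AddCommMonoid T] (F1 F2 : Ind R G H M →+ T)
    (h : ∀ (g : G) (r : R) (m : M),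
      F1 (Submodule.Quotient.mk ((MonoidAlgebra.single g r) ⊗ₜ[R] m))
        = F2 (Submodule.Quotient.mk ((MonoidAlgebra.single g r) ⊗ₜ[R] m))) : F1 = F2 := by
  ext z
  refine ind_induction R G H M (P := fun z => F1 z = F2 z) (by simp) h ?_ z
  intro z w hz hw
  simp only [map_add, hz, hw]

lemma eInd_psiInd (t : (G ⧸ H) →₀ M) : eInd R G H M (psiInd R G H M t) = t := by
  induction t using Finsupp.induction_linear with
  | zero => simp
  | add f g hf hg => rw [map_add, map_add, hf, hg]
  | single q m =>
    rw [psiInd_single, eInd_mk, eTens_tmul, MonoidAlgebra.of_apply, eAux_single,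
      mk_out, rhoH_out, map_one, one_smul, one_smul]

lemma psiInd_eInd (z : Ind R G H M) : psiInd R G H M (eInd R G H M z) = z := by
  refine ind_induction R G H M
    (P := fun z => psiInd R G H M (eInd R G H M z) = z) (by simp) ?_ ?_ z
  · intro g r m
    rw [eInd_mk, eTens_tmul, eAux_single, psiInd_single]
    have e1 : (MonoidAlgebra.of R G (QuotientGroup.mk g : G ⧸ H).out) ⊗ₜ[R]
          (r • ((MonoidAlgebra.of R (↥H) (rhoH G H g)) • m))
        = (r • MonoidAlgebra.of R G (QuotientGroup.mk g : G ⧸ H).out) ⊗ₜ[R]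
          ((MonoidAlgebra.of R (↥H) (rhoH G H g)) • m) := (TensorProduct.smul_tmul _ _ _).symm
    have e2 : (r • MonoidAlgebra.of R G (QuotientGroup.mk g : G ⧸ H).out)
        = MonoidAlgebra.single ((QuotientGroup.mk g : G ⧸ H).out) r := by
      simp [MonoidAlgebra.of_apply, Finsupp.smul_single]
    rw [e1, e2, ← ind_mk_rel R G H, MonoidAlgebra.of_apply, MonoidAlgebra.single_mul_single,
      mul_one, out_mul_rhoH]
  · intro z w hz hw
    simp only [map_add, hz, hw]

/-- `eInd` as an additive equivalence. -/
noncomputable def eIndEquiv : Ind R G H M ≃+ ((G ⧸ H) →₀ M) where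
  toFun := eInd R G H M
  invFun := psiInd R G H M
  left_inv := psiInd_eInd R G H M
  right_inv := eInd_psiInd R G H M
  map_add' := map_add _

lemma eInd_bijective : Function.Bijective (eInd R G H M) :=
  ⟨Function.LeftInverse.injective (psiInd_eInd R G H M),
   Function.RightInverse.surjective (eInd_psiInd R G H M)⟩

end EInd
section Transfer

/-- Exactness is preserved by `Finsupp.mapRange`. -/
lemma exact_mapRange {α : Type u} {M N P : Type v} [AddCommGroup M] [AddCommGroup N]
    [AddCommGroup P] {f : M →+ N} {g : N →+ P} (hfg : Function.Exact f g) :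
    Function.Exact (Finsupp.mapRange.addMonoidHom (ι := α) f)
      (Finsupp.mapRange.addMonoidHom (ι := α) g) := by
  intro y
  constructor
  · intro h
    have hy : ∀ q : α, g (y q) = 0 := by
      intro q
      have := DFunLike.congr_fun h q
      simpa [Finsupp.mapRange.addMonoidHom] using this
    choose x hx using fun q => (hfg (y q)).1 (hy q)
    refine ⟨y.support.sum (fun q => Finsupp.single q (x q)), ?_⟩
    rw [map_sum]
    have : ∀ q ∈ y.support, Finsupp.mapRange.addMonoidHom f (Finsupp.single q (x q))
        = Finsupp.single q (y q) := by
      intro q _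
      ext q'
      simp [Finsupp.mapRange.addMonoidHom, Finsupp.single_apply, hx]
    rw [Finset.sum_congr rfl this]
    exact Finsupp.sum_single y
  · rintro ⟨x, rfl⟩
    ext q
    simpa [Finsupp.mapRange.addMonoidHom] using hfg.apply_apply_eq_zero (x q)

end Transfer

section IndMap

variable (R : Type u) [CommRing R] (G : Type u) [Group G] (H : Subgroup G)
variable {M N P : Type u} [AddCommGroup M] [Module R M] [Module (MonoidAlgebra R (↥H)) M]
  [IsScalarTower R (MonoidAlgebra R (↥H)) M]
  [AddCommGroup N] [Module R N] [Module (MonoidAlgebra R (↥H)) N]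
  [IsScalarTower R (MonoidAlgebra R (↥H)) N]
  [AddCommGroup P] [Module R P] [Module (MonoidAlgebra R (↥H)) P]
  [IsScalarTower R (MonoidAlgebra R (↥H)) P]

/-- The induced `R[G]`-linear map `Ind M → Ind N`. -/
noncomputable def indMap (f : M →ₗ[MonoidAlgebra R (↥H)] N) :
    Ind R G H M →ₗ[MonoidAlgebra R G] Ind R G H N :=
  Submodule.mapQ _ _ (LinearMap.baseChange (MonoidAlgebra R G) (f.restrictScalars R)) (by
    apply Submodule.span_le.2
    rintro z ⟨h, m, rfl⟩
    simp only [SetLike.mem_coe, Submodule.mem_comap, map_sub, LinearMap.baseChange_tmul]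
    have : (f.restrictScalars R) ((MonoidAlgebra.of R (↥H) h) • m)
        = (MonoidAlgebra.of R (↥H) h) • f m := f.map_smul _ m
    rw [this]
    exact Submodule.subset_span ⟨h, f m, rfl⟩)

lemma indMap_mk (f : M →ₗ[MonoidAlgebra R (↥H)] N) (y : MonoidAlgebra R G) (m : M) :
    indMap R G H f (Submodule.Quotient.mk (y ⊗ₜ[R] m))
      = Submodule.Quotient.mk (y ⊗ₜ[R] (f m)) := by
  rfl

lemma eInd_naturality (f : M →ₗ[MonoidAlgebra R (↥H)] N) (z : Ind R G H M) :
    eInd R G H N (indMap R G H f z)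
      = Finsupp.mapRange.addMonoidHom f.toAddMonoidHom (eInd R G H M z) := by
  refine ind_induction R G H M (P := fun z => eInd R G H N (indMap R G H f z)
    = Finsupp.mapRange.addMonoidHom f.toAddMonoidHom (eInd R G H M z)) (by simp) ?_ ?_ z
  · intro g r m
    rw [indMap_mk, eInd_mk, eInd_mk, eTens_tmul, eTens_tmul, eAux_single, eAux_single]
    ext q
    have hf : f (r • ((MonoidAlgebra.of R (↥H) (rhoH G H g)) • m))
        = r • ((MonoidAlgebra.of R (↥H) (rhoH G H g)) • f m) := by
      rw [← smul_assoc, f.map_smul, smul_assoc]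
    rw [Finsupp.mapRange.addMonoidHom_apply, Finsupp.mapRange_single]
    simp [Finsupp.mapRange.addMonoidHom, Finsupp.single_apply, hf, MonoidAlgebra.of_apply]
  · intro z w hz hw
    simp only [map_add, hz, hw]

/-- Exactness is preserved by induction. -/
lemma indMap_exact {f : M →ₗ[MonoidAlgebra R (↥H)] N} {g : N →ₗ[MonoidAlgebra R (↥H)] P}
    (hfg : Function.Exact f g) :
    Function.Exact (indMap R G H f) (indMap R G H g) := by
  have hexact : Function.Exact (Finsupp.mapRange.addMonoidHom (ι := G ⧸ H) f.toAddMonoidHom)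
      (Finsupp.mapRange.addMonoidHom (ι := G ⧸ H) g.toAddMonoidHom) :=
    exact_mapRange (by intro p; exact hfg p)
  have := Function.Exact.of_ladder_addEquiv_of_exact'
    (e₁ := eIndEquiv R G H M) (e₂ := eIndEquiv R G H N) (e₃ := eIndEquiv R G H P)
    (f₁₂ := (indMap R G H f).toAddMonoidHom) (f₂₃ := (indMap R G H g).toAddMonoidHom)
    (g₁₂ := Finsupp.mapRange.addMonoidHom f.toAddMonoidHom)
    (g₂₃ := Finsupp.mapRange.addMonoidHom g.toAddMonoidHom)
    (AddMonoidHom.ext fun z => (eInd_naturality R G H f z).symm)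
    (AddMonoidHom.ext fun z => (eInd_naturality R G H g z).symm) hexact
  intro p
  exact this p

lemma indMap_injective {f : M →ₗ[MonoidAlgebra R (↥H)] N} (hf : Function.Injective f) :
    Function.Injective (indMap R G H f) := by
  have h1 : Function.Injective (Finsupp.mapRange.addMonoidHom (ι := G ⧸ H) f.toAddMonoidHom) :=
    Finsupp.mapRange_injective _ (map_zero _) hf
  intro a b hab
  apply (eInd_bijective R G H M).1
  apply h1
  rw [← eInd_naturality, ← eInd_naturality, hab]

lemma indMap_surjective {f : M →ₗ[MonoidAlgebra R (↥H)] N} (hf : Function.Surjective f) :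
    Function.Surjective (indMap R G H f) := by
  have h1 : Function.Surjective (Finsupp.mapRange.addMonoidHom (ι := G ⧸ H) f.toAddMonoidHom) :=
    Finsupp.mapRange_surjective _ (map_zero _) hf
  intro b
  obtain ⟨t, ht⟩ := h1 (eInd R G H N b)
  obtain ⟨a, rfl⟩ := (eInd_bijective R G H M).2 t
  refine ⟨a, (eInd_bijective R G H N).1 ?_⟩
  rw [eInd_naturality, ht]

lemma ind_subsingleton (hM : ∀ m : M, m = 0) (z : Ind R G H M) : z = 0 := by
  have : Subsingleton ((G ⧸ H) →₀ M) := by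
    constructor; intro a b; ext q; rw [hM (a q), hM (b q)]
  apply (eInd_bijective R G H M).1
  exact Subsingleton.elim _ _

end IndMap
/-- Restriction of an `R[G]`-module to an `R[H]`-module (type synonym). -/
def ResBG (R : Type u) [CommRing R] (G : Type u) [Group G] (_H : Subgroup G) (N : Type u) :
    Type u := N

section Res

variable (R : Type u) [CommRing R] (G : Type u) [Group G] (H : Subgroup G)
variable (N : Type u) [AddCommGroup N] [Module (MonoidAlgebra R G) N]

instance : AddCommGroup (ResBG R G H N) := inferInstanceAs (AddCommGroup N)

noncomputable instance : Module (MonoidAlgebra R G) (ResBG R G H N) :=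
  inferInstanceAs (Module (MonoidAlgebra R G) N)

noncomputable instance : Module (MonoidAlgebra R (↥H)) (ResBG R G H N) :=
  Module.compHom N (iotaB R G H)

noncomputable instance : Module R (ResBG R G H N) :=
  Module.compHom N (algebraMap R (MonoidAlgebra R G))

lemma resBG_smul_B (b : MonoidAlgebra R (↥H)) (n : ResBG R G H N) :
    b • n = (iotaB R G H b • (n : N) : N) := rfl

lemma resBG_smul_R (r : R) (n : ResBG R G H N) :
    r • n = ((algebraMap R (MonoidAlgebra R G) r) • (n : N) : N) := rfl

instance : IsScalarTower R (MonoidAlgebra R (↥H)) (ResBG R G H N) := by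
  constructor
  intro r b n
  rw [resBG_smul_B, resBG_smul_B, resBG_smul_R, Algebra.smul_def, map_mul, iotaB_algebraMap,
    mul_smul]

instance : IsScalarTower R (MonoidAlgebra R G) (ResBG R G H N) := by
  constructor
  intro r a n
  show (r • a) • (n : N) = algebraMap R (MonoidAlgebra R G) r • (a • (n : N))
  rw [Algebra.smul_def, mul_smul]

/-- The identity function out of `ResBG`. -/
def resBGId (n : ResBG R G H N) : N := n

/-- The identity, as an `R[G]`-linear map `ResBG N → N`. -/
def resBGDown : ResBG R G H N →ₗ[MonoidAlgebra R G] N where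
  toFun n := n
  map_add' _ _ := rfl
  map_smul' _ _ := rfl

/-- The identity, as an `R[G]`-linear map `N → ResBG N`. -/
def resBGUp : N →ₗ[MonoidAlgebra R G] ResBG R G H N where
  toFun n := n
  map_add' _ _ := rfl
  map_smul' _ _ := rfl

variable {N' : Type u} [AddCommGroup N'] [Module (MonoidAlgebra R G) N']

/-- Restriction of an `R[G]`-linear map to an `R[H]`-linear map. -/
noncomputable def resBGMap (f : N →ₗ[MonoidAlgebra R G] N') :
    ResBG R G H N →ₗ[MonoidAlgebra R (↥H)] ResBG R G H N' where
  toFun n := f n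
  map_add' := map_add f
  map_smul' b n := map_smul f (iotaB R G H b) n

end Res

section Adjunction

variable (R : Type u) [CommRing R] (G : Type u) [Group G] (H : Subgroup G)
variable (M : Type u) [AddCommGroup M] [Module R M] [Module (MonoidAlgebra R (↥H)) M]
  [IsScalarTower R (MonoidAlgebra R (↥H)) M]
variable (N : Type u) [AddCommGroup N] [Module (MonoidAlgebra R G) N]

/-- Auxiliary bilinear map for `indUp`. -/
noncomputable def indUpAux (u : M →ₗ[MonoidAlgebra R (↥H)] ResBG R G H N) :
    MonoidAlgebra R G →ₗ[MonoidAlgebra R G] (M →ₗ[R] ResBG R G H N) where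
  toFun a :=
    { toFun := fun m => a • (u m)
      map_add' := by intro m m'; show a • u (m + m') = a • u m + a • u m'; rw [map_add, smul_add]
      map_smul' := by
        intro r m
        show a • u (r • m) = r • (a • u m)
        rw [LinearMap.map_smul_of_tower, smul_comm] }
  map_add' a a' := by
    ext m; show (a + a') • u m = a • u m + a' • u m; rw [add_smul]
  map_smul' c a := by
    ext m; show (c • a) • u m = c • (a • u m); rw [smul_eq_mul, mul_smul]

/-- The map on the tensor product underlying `indUp`. -/
noncomputable def indUpTens (u : M →ₗ[MonoidAlgebra R (↥H)] ResBG R G H N) :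
    TensorProduct R (MonoidAlgebra R G) M →ₗ[MonoidAlgebra R G] ResBG R G H N :=
  TensorProduct.AlgebraTensorModule.lift (indUpAux R G H M N u)

lemma indUpTens_tmul (u : M →ₗ[MonoidAlgebra R (↥H)] ResBG R G H N)
    (y : MonoidAlgebra R G) (m : M) :
    indUpTens R G H M N u (y ⊗ₜ[R] m) = y • (u m) := rfl

lemma indUpTens_rel (u : M →ₗ[MonoidAlgebra R (↥H)] ResBG R G H N) :
    indRel R G H M ≤ LinearMap.ker (indUpTens R G H M N u) := by
  apply Submodule.span_le.2
  rintro z ⟨h, m, rfl⟩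
  simp only [SetLike.mem_coe, LinearMap.mem_ker, map_sub, indUpTens_tmul]
  rw [u.map_smul, resBG_smul_B, iotaB_of, one_smul]
  show MonoidAlgebra.of R G (↑h : G) • (u m : N) - MonoidAlgebra.of R G (↑h : G) • (u m : N) = 0
  exact sub_self _
/-- The `R[G]`-linear map `Ind M → N` corresponding to `u : M → Res N`. -/
noncomputable def indUp (u : M →ₗ[MonoidAlgebra R (↥H)] ResBG R G H N) :
    Ind R G H M →ₗ[MonoidAlgebra R G] N :=
  (resBGDown R G H N).comp (Submodule.liftQ _ (indUpTens R G H M N u) (indUpTens_rel R G H M N u))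

lemma indUp_mk (u : M →ₗ[MonoidAlgebra R (↥H)] ResBG R G H N) (y : MonoidAlgebra R G) (m : M) :
    indUp R G H M N u (Submodule.Quotient.mk (y ⊗ₜ[R] m)) = (y • (u m) : ResBG R G H N) := rfl

/-- The `R[H]`-linear map `M → Res N` corresponding to `v : Ind M → N`. -/
noncomputable def indDown (v : Ind R G H M →ₗ[MonoidAlgebra R G] N) :
    M →ₗ[MonoidAlgebra R (↥H)] ResBG R G H N where
  toFun m := v (Submodule.Quotient.mk ((1 : MonoidAlgebra R G) ⊗ₜ[R] m))
  map_add' m m' := by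
    show v (Submodule.Quotient.mk ((1 : MonoidAlgebra R G) ⊗ₜ[R] (m + m'))) = _
    rw [TensorProduct.tmul_add, Submodule.Quotient.mk_add, map_add]
    rfl
  map_smul' b m := by
    show v (Submodule.Quotient.mk ((1 : MonoidAlgebra R G) ⊗ₜ[R] (b • m))) = _
    have h1 : Submodule.Quotient.mk (p := indRel R G H M) ((1 : MonoidAlgebra R G) ⊗ₜ[R] (b • m))
        = (iotaB R G H b) • Submodule.Quotient.mk ((1 : MonoidAlgebra R G) ⊗ₜ[R] m) := by
      rw [← ind_mk_rel' R G H 1 b m, one_mul]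
      rw [← Submodule.Quotient.mk_smul, TensorProduct.smul_tmul', smul_eq_mul, mul_one]
    rw [h1, map_smul]
    rfl

/-- Induction sends projective `R[H]`-modules to projective `R[G]`-modules. -/
theorem ind_projective (hM : Module.Projective (MonoidAlgebra R (↥H)) M) :
    Module.Projective (MonoidAlgebra R G) (Ind R G H M) := by
  apply Module.Projective.of_lifting_property.{u, u}
  intro A' B' _ _ _ _ π g hπ
  have hπ' : Function.Surjective (resBGMap R G H A' π) := hπ
  obtain ⟨w, hw⟩ := Module.projective_lifting_property (resBGMap R G H A' π)
    (indDown R G H M B' g) hπ'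
  refine ⟨indUp R G H M A' w, ?_⟩
  have key : ∀ (gg : G) (r : R) (m : M),
      (π.comp (indUp R G H M A' w))
          (Submodule.Quotient.mk ((MonoidAlgebra.single gg r) ⊗ₜ[R] m))
        = g (Submodule.Quotient.mk ((MonoidAlgebra.single gg r) ⊗ₜ[R] m)) := by
    intro gg r m
    rw [LinearMap.comp_apply, indUp_mk]
    have h2 : π ((MonoidAlgebra.single gg r : MonoidAlgebra R G) • (w m : ResBG R G H A'))
        = (MonoidAlgebra.single gg r : MonoidAlgebra R G) • π (w m : A') := map_smul π _ _
    rw [h2]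
    have h3 : π (w m : A') = (indDown R G H M B' g) m := by
      have := DFunLike.congr_fun hw m
      exact this
    rw [h3]
    show (MonoidAlgebra.single gg r : MonoidAlgebra R G)
        • g (Submodule.Quotient.mk ((1 : MonoidAlgebra R G) ⊗ₜ[R] m)) = _
    rw [← map_smul, ← Submodule.Quotient.mk_smul, TensorProduct.smul_tmul', smul_eq_mul, mul_one]
  apply LinearMap.ext
  intro z
  refine ind_induction R G H M (P := fun z => (π.comp (indUp R G H M A' w)) z = g z)
    (by simp) key ?_ z
  intro z w' hz hw'
  simp only [map_add, hz, hw']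

end Adjunction
section NCTHelpers

variable (S : Type u) [Ring S] (I : Type u) [AddCommGroup I] [Module Sᵐᵒᵖ I]
variable (M : Type u) [AddCommGroup M] [Module S M]

lemma nct_mk_rel (x : I) (s : S) (m : M) :
    (Submodule.Quotient.mk (p := ncRel S I M) ((MulOpposite.op s • x) ⊗ₜ[ℤ] m))
      = Submodule.Quotient.mk (x ⊗ₜ[ℤ] (s • m)) := by
  rw [← sub_eq_zero, ← Submodule.Quotient.mk_sub, Submodule.Quotient.mk_eq_zero]
  exact Submodule.subset_span ⟨x, s, m, rfl⟩

lemma nct_induction {P : NCT S I M → Prop} (zero : P 0)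
    (tmul : ∀ (x : I) (m : M), P (Submodule.Quotient.mk (x ⊗ₜ[ℤ] m)))
    (add : ∀ z w, P z → P w → P (z + w)) : ∀ z, P z := by
  intro z
  obtain ⟨t, rfl⟩ := Submodule.Quotient.mk_surjective _ z
  induction t using TensorProduct.induction_on with
  | zero => simpa using zero
  | tmul x m => exact tmul x m
  | add t s ht hs => rw [Submodule.Quotient.mk_add]; exact add _ _ ht hs

lemma nct_hom_ext {T : Type v} [AddCommMonoid T] (F1 F2 : NCT S I M →+ T)
    (h : ∀ (x : I) (m : M), F1 (Submodule.Quotient.mk (x ⊗ₜ[ℤ] m))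
      = F2 (Submodule.Quotient.mk (x ⊗ₜ[ℤ] m))) : F1 = F2 := by
  ext z
  refine nct_induction S I M (P := fun z => F1 z = F2 z) (by simp) h ?_ z
  intro z w hz hw
  simp only [map_add, hz, hw]

variable {M} {N : Type u} [AddCommGroup N] [Module S N]

lemma nctMap_mk (f : M →ₗ[S] N) (x : I) (m : M) :
    nctMap S I f (Submodule.Quotient.mk (x ⊗ₜ[ℤ] m))
      = Submodule.Quotient.mk (x ⊗ₜ[ℤ] (f m)) := rfl

end NCTHelpers

section RopDef

variable (R : Type u) [CommRing R] (G : Type u) [Group G] (H : Subgroup G)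

/-- Restriction of a right `R[G]`-module to a right `R[H]`-module (type synonym). -/
def Rop (R : Type u) [CommRing R] (G : Type u) [Group G] (_H : Subgroup G) (I : Type u) :
    Type u := I

variable (I : Type u) [AddCommGroup I] [Module (MonoidAlgebra R G)ᵐᵒᵖ I]

instance : AddCommGroup (Rop R G H I) := inferInstanceAs (AddCommGroup I)

noncomputable instance : Module (MonoidAlgebra R (↥H))ᵐᵒᵖ (Rop R G H I) :=
  Module.compHom I (RingHom.op (iotaB R G H))

/-- The identity map `Rop I → I`. -/
def ropDown (x : Rop R G H I) : I := x

/-- The identity map `I → Rop I`. -/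
def ropUp (x : I) : Rop R G H I := x

lemma rop_smul (c : (MonoidAlgebra R (↥H))ᵐᵒᵖ) (x : Rop R G H I) :
    ropDown R G H I (c • x)
      = (MulOpposite.op (iotaB R G H c.unop) : (MonoidAlgebra R G)ᵐᵒᵖ) • ropDown R G H I x := rfl

end RopDef

section Theta

variable (R : Type u) [CommRing R] (G : Type u) [Group G] (H : Subgroup G)
variable (I : Type u) [AddCommGroup I] [Module (MonoidAlgebra R G)ᵐᵒᵖ I]
variable (M : Type u) [AddCommGroup M] [Module R M] [Module (MonoidAlgebra R (↥H)) M]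
  [IsScalarTower R (MonoidAlgebra R (↥H)) M]

lemma quot_mk_zsmul {X : Type u} [AddCommGroup X] (p : Submodule ℤ X) (k : ℤ) (y : X) :
    (Submodule.Quotient.mk (k • y) : X ⧸ p) = k • Submodule.Quotient.mk y :=
  Submodule.Quotient.mk_smul p k y

/-- `I ⊗_{RH} M → I ⊗_{RG} Ind M` on the tensor level. -/
noncomputable def thetaBackTens :
    TensorProduct ℤ (Rop R G H I) M →+ NCT (MonoidAlgebra R G) I (Ind R G H M) :=
  TensorProduct.liftAddHom
    (AddMonoidHom.mk' (fun x => AddMonoidHom.mk'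
      (fun m => Submodule.Quotient.mk ((ropDown R G H I x) ⊗ₜ[ℤ]
        (Submodule.Quotient.mk ((1 : MonoidAlgebra R G) ⊗ₜ[R] m) : Ind R G H M)))
      (by
        intro m m'
        show Submodule.Quotient.mk ((ropDown R G H I x) ⊗ₜ[ℤ]
            (Submodule.Quotient.mk ((1 : MonoidAlgebra R G) ⊗ₜ[R] (m + m')) : Ind R G H M)) = _
        rw [TensorProduct.tmul_add, Submodule.Quotient.mk_add,
            TensorProduct.tmul_add, Submodule.Quotient.mk_add]))
      (by
        intro x x'
        ext m
        show Submodule.Quotient.mk ((ropDown R G H I (x + x')) ⊗ₜ[ℤ] _) = _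
        rw [show ropDown R G H I (x + x') = ropDown R G H I x + ropDown R G H I x' from rfl,
          TensorProduct.add_tmul, Submodule.Quotient.mk_add]
        rfl))
    (by
      intro n x m
      show Submodule.Quotient.mk ((ropDown R G H I (n • x)) ⊗ₜ[ℤ] _)
        = Submodule.Quotient.mk ((ropDown R G H I x) ⊗ₜ[ℤ]
            (Submodule.Quotient.mk ((1 : MonoidAlgebra R G) ⊗ₜ[R] (n • m)) : Ind R G H M))
      rw [show ropDown R G H I (n • x) = n • ropDown R G H I x from rfl]
      rw [TensorProduct.smul_tmul, TensorProduct.tmul_smul, quot_mk_zsmul]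
      rw [show ((1 : MonoidAlgebra R G) ⊗ₜ[R] (n • m)) = n • ((1 : MonoidAlgebra R G) ⊗ₜ[R] m)
          from TensorProduct.tmul_smul n _ m, Submodule.Quotient.mk_smul,
        TensorProduct.tmul_smul, quot_mk_zsmul])

lemma thetaBackTens_tmul (x : Rop R G H I) (m : M) :
    thetaBackTens R G H I M (x ⊗ₜ[ℤ] m)
      = Submodule.Quotient.mk ((ropDown R G H I x) ⊗ₜ[ℤ]
          (Submodule.Quotient.mk ((1 : MonoidAlgebra R G) ⊗ₜ[R] m) : Ind R G H M)) := by
  rw [thetaBackTens, TensorProduct.liftAddHom_tmul]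
  rfl

lemma ind_one_smul_mk (b : MonoidAlgebra R (↥H)) (m : M) :
    (Submodule.Quotient.mk ((1 : MonoidAlgebra R G) ⊗ₜ[R] (b • m)) : Ind R G H M)
      = iotaB R G H b • Submodule.Quotient.mk ((1 : MonoidAlgebra R G) ⊗ₜ[R] m) := by
  rw [← ind_mk_rel' R G H 1 b m, one_mul, ← Submodule.Quotient.mk_smul,
    TensorProduct.smul_tmul', smul_eq_mul, mul_one]

lemma thetaBackTens_rel :
    ∀ z ∈ ncRel (MonoidAlgebra R (↥H)) (Rop R G H I) M, thetaBackTens R G H I M z = 0 := by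
  intro z hz
  induction hz using Submodule.span_induction with
  | mem z hzz =>
    obtain ⟨x, s, m, rfl⟩ := hzz
    rw [map_sub, thetaBackTens_tmul, thetaBackTens_tmul, rop_smul, ind_one_smul_mk,
      MulOpposite.unop_op, nct_mk_rel (MonoidAlgebra R G) I (Ind R G H M) (ropDown R G H I x)
        (iotaB R G H s)]
    exact sub_self _
  | zero => rw [map_zero]
  | add z w _ _ hz hw => rw [map_add, hz, hw, add_zero]
  | smul c z _ hz => rw [AddMonoidHom.map_zsmul, hz, smul_zero]

/-- The comparison map `I ⊗_{RH} M → I ⊗_{RG} Ind M`. -/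
noncomputable def thetaBack :
    NCT (MonoidAlgebra R (↥H)) (Rop R G H I) M →+ NCT (MonoidAlgebra R G) I (Ind R G H M) :=
  QuotientAddGroup.lift (ncRel (MonoidAlgebra R (↥H)) (Rop R G H I) M).toAddSubgroup
    (thetaBackTens R G H I M) (thetaBackTens_rel R G H I M)

lemma thetaBack_mk (x : Rop R G H I) (m : M) :
    thetaBack R G H I M (Submodule.Quotient.mk (x ⊗ₜ[ℤ] m))
      = Submodule.Quotient.mk ((ropDown R G H I x) ⊗ₜ[ℤ]
          (Submodule.Quotient.mk ((1 : MonoidAlgebra R G) ⊗ₜ[R] m) : Ind R G H M)) :=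
  thetaBackTens_tmul R G H I M x m

end Theta
section ThetaFwd

variable (R : Type u) [CommRing R] (G : Type u) [Group G] (H : Subgroup G)
variable (I : Type u) [AddCommGroup I] [Module (MonoidAlgebra R G)ᵐᵒᵖ I]
variable (M : Type u) [AddCommGroup M] [Module R M] [Module (MonoidAlgebra R (↥H)) M]
  [IsScalarTower R (MonoidAlgebra R (↥H)) M]

/-- First stage of `thetaFwd`: for fixed `x : I`, a map on the tensor product. -/
noncomputable def thetaT1 (x : I) : TensorProduct R (MonoidAlgebra R G) M →+
    NCT (MonoidAlgebra R (↥H)) (Rop R G H I) M :=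
  TensorProduct.liftAddHom
    (AddMonoidHom.mk' (fun y => AddMonoidHom.mk'
      (fun m => Submodule.Quotient.mk
        ((ropUp R G H I (MulOpposite.op y • x)) ⊗ₜ[ℤ] m))
      (by
        intro m m'
        show Submodule.Quotient.mk ((ropUp R G H I (MulOpposite.op y • x)) ⊗ₜ[ℤ] (m + m')) = _
        rw [TensorProduct.tmul_add, Submodule.Quotient.mk_add]))
      (by
        intro y y'
        ext m
        show Submodule.Quotient.mk ((ropUp R G H I (MulOpposite.op (y + y') • x)) ⊗ₜ[ℤ] m) = _
        rw [show (MulOpposite.op (y + y') : (MonoidAlgebra R G)ᵐᵒᵖ)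
            = MulOpposite.op y + MulOpposite.op y' from rfl, add_smul]
        rw [show ropUp R G H I (MulOpposite.op y • x + MulOpposite.op y' • x)
            = ropUp R G H I (MulOpposite.op y • x) + ropUp R G H I (MulOpposite.op y' • x)
            from rfl, TensorProduct.add_tmul, Submodule.Quotient.mk_add]
        rfl))
    (by
      intro r y m
      show Submodule.Quotient.mk ((ropUp R G H I (MulOpposite.op (r • y) • x)) ⊗ₜ[ℤ] m)
        = Submodule.Quotient.mk ((ropUp R G H I (MulOpposite.op y • x)) ⊗ₜ[ℤ] (r • m))
      have h1 : (MulOpposite.op (r • y) : (MonoidAlgebra R G)ᵐᵒᵖ)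
          = MulOpposite.op (algebraMap R (MonoidAlgebra R G) r) * MulOpposite.op y := by
        rw [Algebra.smul_def, Algebra.commutes]
        rfl
      have h2 : ropUp R G H I (MulOpposite.op (r • y) • x)
          = (MulOpposite.op (algebraMap R (MonoidAlgebra R (↥H)) r)) •
              ropUp R G H I (MulOpposite.op y • x) := by
        rw [h1, mul_smul]
        show ropUp R G H I (MulOpposite.op (algebraMap R (MonoidAlgebra R G) r)
          • (MulOpposite.op y • x)) = _
        rw [← iotaB_algebraMap R G H r]
        rfl
      rw [h2, nct_mk_rel (MonoidAlgebra R (↥H)) (Rop R G H I) M _ _ m, algebraMap_smul])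

lemma thetaT1_tmul (x : I) (y : MonoidAlgebra R G) (m : M) :
    thetaT1 R G H I M x (y ⊗ₜ[R] m)
      = Submodule.Quotient.mk ((ropUp R G H I (MulOpposite.op y • x)) ⊗ₜ[ℤ] m) := by
  rw [thetaT1, TensorProduct.liftAddHom_tmul]
  rfl

lemma thetaT1_rel (x : I) : ∀ z ∈ indRel R G H M, thetaT1 R G H I M x z = 0 := by
  have key : ∀ (y : MonoidAlgebra R G) (h : ↥H) (m : M),
      thetaT1 R G H I M x ((y * MonoidAlgebra.of R G (↑h : G)) ⊗ₜ[R] m)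
        = thetaT1 R G H I M x (y ⊗ₜ[R] ((MonoidAlgebra.of R (↥H) h) • m)) := by
    intro y h m
    rw [thetaT1_tmul, thetaT1_tmul]
    have h1 : ropUp R G H I (MulOpposite.op (y * MonoidAlgebra.of R G (↑h : G)) • x)
        = (MulOpposite.op (MonoidAlgebra.of R (↥H) h)) •
            ropUp R G H I (MulOpposite.op y • x) := by
      rw [show (MulOpposite.op (y * MonoidAlgebra.of R G (↑h : G)) : (MonoidAlgebra R G)ᵐᵒᵖ)
          = MulOpposite.op (MonoidAlgebra.of R G (↑h : G)) * MulOpposite.op y from rfl, mul_smul]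
      rw [← iotaB_of R G H h]
      rfl
    rw [h1, nct_mk_rel (MonoidAlgebra R (↥H)) (Rop R G H I) M _ _ m]
  have main : ∀ z ∈ indRel R G H M, ∀ y : MonoidAlgebra R G,
      thetaT1 R G H I M x (y • z) = 0 := by
    intro z hz
    induction hz using Submodule.span_induction with
    | mem z hzz =>
      obtain ⟨h, m, rfl⟩ := hzz
      intro y
      rw [smul_sub, TensorProduct.smul_tmul', TensorProduct.smul_tmul', map_sub,
        smul_eq_mul, smul_eq_mul, mul_one, key]
      exact sub_self _
    | zero => intro y; rw [smul_zero, map_zero]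
    | add z w _ _ hz hw => intro y; rw [smul_add, map_add, hz, hw, add_zero]
    | smul c z _ hz => intro y; rw [smul_smul]; exact hz _
  intro z hz
  simpa using main z hz 1

/-- Second stage: for fixed `x : I`, a map `Ind M → I ⊗_{RH} M`. -/
noncomputable def thetaT2 (x : I) : Ind R G H M →+
    NCT (MonoidAlgebra R (↥H)) (Rop R G H I) M :=
  QuotientAddGroup.lift (indRel R G H M).toAddSubgroup (thetaT1 R G H I M x)
    (thetaT1_rel R G H I M x)

lemma thetaT2_mk (x : I) (y : MonoidAlgebra R G) (m : M) :
    thetaT2 R G H I M x (Submodule.Quotient.mk (y ⊗ₜ[R] m))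
      = Submodule.Quotient.mk ((ropUp R G H I (MulOpposite.op y • x)) ⊗ₜ[ℤ] m) :=
  thetaT1_tmul R G H I M x y m

lemma thetaT2_add (x x' : I) :
    thetaT2 R G H I M (x + x') = thetaT2 R G H I M x + thetaT2 R G H I M x' := by
  refine ind_hom_ext R G H M _ _ ?_
  intro g r m
  rw [AddMonoidHom.add_apply, thetaT2_mk, thetaT2_mk, thetaT2_mk, smul_add]
  rw [show ropUp R G H I (MulOpposite.op (MonoidAlgebra.single g r) • x
      + MulOpposite.op (MonoidAlgebra.single g r) • x')
    = ropUp R G H I (MulOpposite.op (MonoidAlgebra.single g r) • x)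
      + ropUp R G H I (MulOpposite.op (MonoidAlgebra.single g r) • x') from rfl,
    TensorProduct.add_tmul, Submodule.Quotient.mk_add]

/-- The tensor-level forward comparison map. -/
noncomputable def thetaFwdTens : TensorProduct ℤ I (Ind R G H M) →+
    NCT (MonoidAlgebra R (↥H)) (Rop R G H I) M :=
  TensorProduct.liftAddHom (AddMonoidHom.mk' (thetaT2 R G H I M) (thetaT2_add R G H I M))
    (by
      intro n x z
      show thetaT2 R G H I M (n • x) z = thetaT2 R G H I M x (n • z)
      have h1 : thetaT2 R G H I M (n • x) = n • thetaT2 R G H I M x :=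
        map_zsmul (AddMonoidHom.mk' (thetaT2 R G H I M) (thetaT2_add R G H I M)) n x
      rw [h1, AddMonoidHom.smul_apply, map_zsmul])

lemma thetaFwdTens_tmul (x : I) (z : Ind R G H M) :
    thetaFwdTens R G H I M (x ⊗ₜ[ℤ] z) = thetaT2 R G H I M x z := by
  rw [thetaFwdTens, TensorProduct.liftAddHom_tmul]
  rfl

lemma thetaT2_op (a : MonoidAlgebra R G) (x : I) (z : Ind R G H M) :
    thetaT2 R G H I M (MulOpposite.op a • x) z = thetaT2 R G H I M x (a • z) := by
  have := ind_hom_ext R G H M (thetaT2 R G H I M (MulOpposite.op a • x))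
    ((thetaT2 R G H I M x).comp (DistribMulAction.toAddMonoidHom (Ind R G H M) a)) ?_
  · exact DFunLike.congr_fun this z
  · intro g r m
    rw [thetaT2_mk, AddMonoidHom.comp_apply, DistribMulAction.toAddMonoidHom_apply]
    have h2 : a • (Submodule.Quotient.mk ((MonoidAlgebra.single g r) ⊗ₜ[R] m) : Ind R G H M)
        = Submodule.Quotient.mk ((a * MonoidAlgebra.single g r) ⊗ₜ[R] m) := by
      rw [← Submodule.Quotient.mk_smul, TensorProduct.smul_tmul', smul_eq_mul]
    rw [h2, thetaT2_mk]
    rw [show (MulOpposite.op (MonoidAlgebra.single g r) : (MonoidAlgebra R G)ᵐᵒᵖ)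
        • (MulOpposite.op a • x) = MulOpposite.op (a * MonoidAlgebra.single g r) • x from by
      rw [← mul_smul]; rfl]

lemma thetaFwdTens_rel :
    ∀ z ∈ ncRel (MonoidAlgebra R G) I (Ind R G H M), thetaFwdTens R G H I M z = 0 := by
  intro z hz
  induction hz using Submodule.span_induction with
  | mem z hzz =>
    obtain ⟨x, a, w, rfl⟩ := hzz
    rw [map_sub, thetaFwdTens_tmul, thetaFwdTens_tmul, thetaT2_op]
    exact sub_self _
  | zero => rw [map_zero]
  | add z w _ _ hz hw => rw [map_add, hz, hw, add_zero]
  | smul c z _ hz => rw [AddMonoidHom.map_zsmul, hz, smul_zero]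

/-- The forward comparison map `I ⊗_{RG} Ind M → I ⊗_{RH} M`. -/
noncomputable def thetaFwd : NCT (MonoidAlgebra R G) I (Ind R G H M) →+
    NCT (MonoidAlgebra R (↥H)) (Rop R G H I) M :=
  QuotientAddGroup.lift (ncRel (MonoidAlgebra R G) I (Ind R G H M)).toAddSubgroup
    (thetaFwdTens R G H I M) (thetaFwdTens_rel R G H I M)

lemma thetaFwd_mk (x : I) (z : Ind R G H M) :
    thetaFwd R G H I M (Submodule.Quotient.mk (x ⊗ₜ[ℤ] z)) = thetaT2 R G H I M x z :=
  thetaFwdTens_tmul R G H I M x z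

lemma thetaFwd_thetaBack (t : NCT (MonoidAlgebra R (↥H)) (Rop R G H I) M) :
    thetaFwd R G H I M (thetaBack R G H I M t) = t := by
  refine nct_induction (MonoidAlgebra R (↥H)) (Rop R G H I) M
    (P := fun t => thetaFwd R G H I M (thetaBack R G H I M t) = t) (by simp) ?_ ?_ t
  · intro x m
    rw [thetaBack_mk, thetaFwd_mk, thetaT2_mk]
    rw [show MulOpposite.op (1 : MonoidAlgebra R G) • (ropDown R G H I x) = ropDown R G H I x
      from one_smul _ _]
    rfl
  · intro z w hz hw
    rw [map_add, map_add, hz, hw]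

lemma thetaBack_thetaFwd (z : NCT (MonoidAlgebra R G) I (Ind R G H M)) :
    thetaBack R G H I M (thetaFwd R G H I M z) = z := by
  refine nct_induction (MonoidAlgebra R G) I (Ind R G H M)
    (P := fun z => thetaBack R G H I M (thetaFwd R G H I M z) = z) (by simp) ?_ ?_ z
  · intro x w
    rw [thetaFwd_mk]
    refine ind_induction R G H M (P := fun w => thetaBack R G H I M (thetaT2 R G H I M x w)
      = Submodule.Quotient.mk (x ⊗ₜ[ℤ] w)) ?_ ?_ ?_ w
    · show thetaBack R G H I M (thetaT2 R G H I M x 0)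
          = Submodule.Quotient.mk (x ⊗ₜ[ℤ] (0 : Ind R G H M))
      rw [map_zero, map_zero, TensorProduct.tmul_zero]
      simp
    · intro g r m
      rw [thetaT2_mk, thetaBack_mk]
      have h1 : (MonoidAlgebra.single g r : MonoidAlgebra R G)
            • (Submodule.Quotient.mk ((1 : MonoidAlgebra R G) ⊗ₜ[R] m) : Ind R G H M)
          = Submodule.Quotient.mk ((MonoidAlgebra.single g r) ⊗ₜ[R] m) := by
        rw [← Submodule.Quotient.mk_smul, TensorProduct.smul_tmul', smul_eq_mul, mul_one]
      rw [show ropDown R G H I (ropUp R G H I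
          (MulOpposite.op (MonoidAlgebra.single g r) • x))
        = MulOpposite.op (MonoidAlgebra.single g r) • x from rfl]
      rw [nct_mk_rel (MonoidAlgebra R G) I (Ind R G H M), h1]
    · intro z w hz hw
      rw [map_add, map_add, TensorProduct.tmul_add, Submodule.Quotient.mk_add, hz, hw]
  · intro z w hz hw
    rw [map_add, map_add, hz, hw]

/-- The comparison additive equivalence `I ⊗_{RH} M ≃ I ⊗_{RG} Ind M`. -/
noncomputable def thetaEquiv : NCT (MonoidAlgebra R (↥H)) (Rop R G H I) M ≃+
    NCT (MonoidAlgebra R G) I (Ind R G H M) where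
  toFun := thetaBack R G H I M
  invFun := thetaFwd R G H I M
  left_inv := thetaFwd_thetaBack R G H I M
  right_inv := thetaBack_thetaFwd R G H I M
  map_add' := map_add _

variable {M} {N : Type u} [AddCommGroup N] [Module R N] [Module (MonoidAlgebra R (↥H)) N]
  [IsScalarTower R (MonoidAlgebra R (↥H)) N]

lemma theta_natural (f : M →ₗ[MonoidAlgebra R (↥H)] N)
    (t : NCT (MonoidAlgebra R (↥H)) (Rop R G H I) M) :
    nctMap (MonoidAlgebra R G) I (indMap R G H f) (thetaBack R G H I M t)
      = thetaBack R G H I N (nctMap (MonoidAlgebra R (↥H)) (Rop R G H I) f t) := by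
  refine nct_induction (MonoidAlgebra R (↥H)) (Rop R G H I) M
    (P := fun t => nctMap (MonoidAlgebra R G) I (indMap R G H f) (thetaBack R G H I M t)
      = thetaBack R G H I N (nctMap (MonoidAlgebra R (↥H)) (Rop R G H I) f t)) (by simp; rfl) ?_ ?_ t
  · intro x m
    rw [thetaBack_mk, nctMap_mk, nctMap_mk, thetaBack_mk, indMap_mk]
  · intro z w hz hw
    rw [map_add, map_add, map_add, map_add, hz, hw]

end ThetaFwd
section Antipode

variable (R : Type u) [CommRing R] (K : Type u) [Group K]

/-- The antipode `g ↦ g⁻¹` on a group algebra. -/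
noncomputable def antip : MonoidAlgebra R K → MonoidAlgebra R K :=
  MonoidAlgebra.mapDomain (fun g => g⁻¹)

lemma antip_single (g : K) (r : R) :
    antip R K (MonoidAlgebra.single g r) = MonoidAlgebra.single g⁻¹ r :=
  MonoidAlgebra.mapDomain_single

lemma antip_add (x y : MonoidAlgebra R K) : antip R K (x + y) = antip R K x + antip R K y :=
  MonoidAlgebra.mapDomain_add _ _ _

lemma antip_antip (x : MonoidAlgebra R K) : antip R K (antip R K x) = x := by
  induction x using MonoidAlgebra.induction_linear with
  | zero => simp [antip]
  | add f g hf hg => rw [antip_add, antip_add, hf, hg]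
  | single g r => rw [antip_single, antip_single, inv_inv]

lemma antip_mul (x y : MonoidAlgebra R K) : antip R K (x * y) = antip R K y * antip R K x := by
  induction x using MonoidAlgebra.induction_linear with
  | zero => simp [antip]
  | add f g hf hg => rw [add_mul, antip_add, antip_add, hf, hg, mul_add]
  | single g r =>
    induction y using MonoidAlgebra.induction_linear with
    | zero => simp [antip]
    | add f' g' hf' hg' => rw [mul_add, antip_add, antip_add, hf', hg', add_mul]
    | single g' r' =>
      rw [MonoidAlgebra.single_mul_single, antip_single, antip_single, antip_single,
        MonoidAlgebra.single_mul_single, mul_inv_rev, mul_comm r r']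

lemma antip_one : antip R K (1 : MonoidAlgebra R K) = 1 := by
  rw [show (1 : MonoidAlgebra R K) = MonoidAlgebra.single 1 1 from rfl, antip_single, inv_one]

/-- The ring isomorphism `R[K] ≃ R[K]ᵐᵒᵖ` induced by the antipode. -/
noncomputable def alphaK : MonoidAlgebra R K ≃+* (MonoidAlgebra R K)ᵐᵒᵖ where
  toFun a := MulOpposite.op (antip R K a)
  invFun b := antip R K b.unop
  left_inv a := antip_antip R K a
  right_inv b := by simp [antip_antip]
  map_add' a b := by
    show MulOpposite.op (antip R K (a + b)) = MulOpposite.op (antip R K a) + MulOpposite.op (antip R K b)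
    rw [antip_add]
    rfl
  map_mul' a b := by
    show MulOpposite.op (antip R K (a * b)) = MulOpposite.op (antip R K a) * MulOpposite.op (antip R K b)
    rw [antip_mul]
    rfl

lemma alphaK_single (g : K) (r : R) :
    alphaK R K (MonoidAlgebra.single g r) = MulOpposite.op (MonoidAlgebra.single g⁻¹ r) := by
  show MulOpposite.op (antip R K (MonoidAlgebra.single g r)) = _
  rw [antip_single]

end Antipode

section AlphaIota

variable (R : Type u) [CommRing R] (G : Type u) [Group G] (H : Subgroup G)

lemma alpha_iota (b : MonoidAlgebra R (↥H)) :
    (RingHom.op (iotaB R G H)) (alphaK R (↥H) b) = alphaK R G (iotaB R G H b) := by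
  induction b using MonoidAlgebra.induction_linear with
  | zero => simp
  | add f g hf hg => rw [map_add, map_add, map_add, map_add, hf, hg]
  | single h r =>
    rw [iotaB_single, alphaK_single, alphaK_single]
    show MulOpposite.op (iotaB R G H (MonoidAlgebra.single h⁻¹ r)) = _
    rw [iotaB_single]
    rfl

end AlphaIota

section InjTransfer

/-- Transfer of injectivity along a ring isomorphism. -/
theorem injective_of_ringEquiv {S S' Q : Type u} [Ring S] [Ring S'] [AddCommGroup Q]
    [Module S Q] [Module S' Q] (e : S' ≃+* S) (hsmul : ∀ (s' : S') (q : Q), s' • q = e s' • q)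
    (hQ : Module.Injective S Q) : Module.Injective S' Q := by
  constructor
  intro X Y _ _ _ _ f hf g
  letI : Module S X := Module.compHom X e.symm.toRingHom
  letI : Module S Y := Module.compHom Y e.symm.toRingHom
  obtain ⟨h', hh⟩ := hQ.out (X := X) (Y := Y)
    { toFun := f, map_add' := map_add f,
      map_smul' := fun s x => by
        show f (e.symm s • x) = e.symm s • f x
        exact f.map_smul _ _ }
    (fun a b hab => hf (by exact hab))
    { toFun := g, map_add' := map_add g,
      map_smul' := fun s x => by
        show g (e.symm s • x) = s • g x
        rw [g.map_smul, hsmul, e.apply_symm_apply] }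
  refine ⟨{ toFun := h', map_add' := map_add h', map_smul' := fun s' y => ?_ },
    fun x => by exact hh x⟩
  show h' (s' • y) = s' • h' y
  have : (s' • y) = (e s') • y := by
    show s' • y = e.symm (e s') • y
    rw [e.symm_apply_apply]
  rw [this, h'.map_smul, hsmul]

end InjTransfer

section FlatMod

variable (R : Type u) [CommRing R] (K : Type u) [Group K]

/-- A right `R[K]`-module viewed as a left `R[K]`-module via the antipode (type synonym). -/
def FlatMod (R : Type u) [CommRing R] (K : Type u) [Group K] (X : Type u) : Type u := X

variable (X : Type u) [AddCommGroup X] [Module (MonoidAlgebra R K)ᵐᵒᵖ X]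

instance : AddCommGroup (FlatMod R K X) := inferInstanceAs (AddCommGroup X)

noncomputable instance : Module (MonoidAlgebra R K)ᵐᵒᵖ (FlatMod R K X) :=
  inferInstanceAs (Module (MonoidAlgebra R K)ᵐᵒᵖ X)

noncomputable instance : Module (MonoidAlgebra R K) (FlatMod R K X) :=
  Module.compHom X (alphaK R K).toRingHom

lemma flatMod_smul (b : MonoidAlgebra R K) (x : FlatMod R K X) :
    b • x = ((alphaK R K b) • (x : X) : X) := rfl

noncomputable instance : Module R (FlatMod R K X) :=
  Module.compHom X ((alphaK R K).toRingHom.comp (algebraMap R (MonoidAlgebra R K)))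

lemma flatMod_smul_R (r : R) (x : FlatMod R K X) :
    r • x = ((alphaK R K (algebraMap R (MonoidAlgebra R K) r)) • (x : X) : X) := rfl

instance : IsScalarTower R (MonoidAlgebra R K) (FlatMod R K X) := by
  constructor
  intro r b x
  rw [flatMod_smul, flatMod_smul, flatMod_smul_R, Algebra.smul_def, map_mul, mul_smul]

variable {X} {Y : Type u} [AddCommGroup Y] [Module (MonoidAlgebra R K)ᵐᵒᵖ Y]

/-- The identity function out of `FlatMod`. -/
def flatModDown {X : Type u} (x : FlatMod R K X) : X := x

/-- A right-module map viewed as a map of the associated left modules. -/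
noncomputable def flatMap (f : X →ₗ[(MonoidAlgebra R K)ᵐᵒᵖ] Y) :
    FlatMod R K X →ₗ[MonoidAlgebra R K] FlatMod R K Y where
  toFun x := f x
  map_add' := map_add f
  map_smul' b x := f.map_smul (alphaK R K b) x

/-- A left-module map viewed as a map of right modules. -/
noncomputable def unflatMap (f : FlatMod R K X →ₗ[MonoidAlgebra R K] FlatMod R K Y) :
    X →ₗ[(MonoidAlgebra R K)ᵐᵒᵖ] Y where
  toFun x := f x
  map_add' := map_add f
  map_smul' c x := by
    show f (c • x) = c • (f x : Y)
    rw [← RingEquiv.apply_symm_apply (alphaK R K) c]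
    exact f.map_smul ((alphaK R K).symm c) x

end FlatMod

section RopInj

variable (R : Type u) [CommRing R] (G : Type u) [Group G] (H : Subgroup G)
variable (I : Type u) [AddCommGroup I] [Module (MonoidAlgebra R G)ᵐᵒᵖ I]

/-- The two natural `R[H]`-module structures on a restricted flattened module agree. -/
noncomputable def flatRop :
    FlatMod R (↥H) (Rop R G H I) →ₗ[MonoidAlgebra R (↥H)] ResBG R G H (FlatMod R G I) where
  toFun x := x
  map_add' _ _ := rfl
  map_smul' b x := by
    show (MulOpposite.op (iotaB R G H (antip R (↥H) b)) : (MonoidAlgebra R G)ᵐᵒᵖ)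
          • (ropDown R G H I (flatModDown R (↥H) x))
        = (MulOpposite.op (antip R G (iotaB R G H b)) : (MonoidAlgebra R G)ᵐᵒᵖ)
          • (ropDown R G H I (flatModDown R (↥H) x))
    have h' : (MulOpposite.op (iotaB R G H (antip R (↥H) b)) : (MonoidAlgebra R G)ᵐᵒᵖ)
        = MulOpposite.op (antip R G (iotaB R G H b)) := alpha_iota R G H b
    rw [h']

/-- Inverse of `flatRop`. -/
noncomputable def ropFlat :
    ResBG R G H (FlatMod R G I) →ₗ[MonoidAlgebra R (↥H)] FlatMod R (↥H) (Rop R G H I) where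
  toFun x := x
  map_add' _ _ := rfl
  map_smul' b x := by
    show (MulOpposite.op (antip R G (iotaB R G H b)) : (MonoidAlgebra R G)ᵐᵒᵖ)
          • (flatModDown R G (resBGId R G H (FlatMod R G I) x))
        = (MulOpposite.op (iotaB R G H (antip R (↥H) b)) : (MonoidAlgebra R G)ᵐᵒᵖ)
          • (flatModDown R G (resBGId R G H (FlatMod R G I) x))
    have h' : (MulOpposite.op (iotaB R G H (antip R (↥H) b)) : (MonoidAlgebra R G)ᵐᵒᵖ)
        = MulOpposite.op (antip R G (iotaB R G H b)) := alpha_iota R G H b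
    rw [h']

/-- Restriction of an injective right `R[G]`-module is an injective right `R[H]`-module. -/
theorem rop_injective (hI : Module.Injective (MonoidAlgebra R G)ᵐᵒᵖ I) :
    Module.Injective (MonoidAlgebra R (↥H))ᵐᵒᵖ (Rop R G H I) := by
  have hI' : Module.Injective (MonoidAlgebra R G)ᵐᵒᵖ (FlatMod R G I) := hI
  have hAI : Module.Injective (MonoidAlgebra R G) (FlatMod R G I) :=
    injective_of_ringEquiv (alphaK R G) (fun a q => rfl) hI'
  constructor
  intro X Y _ _ _ _ f hf g
  have hf' : Function.Injective (flatMap R (↥H) f) := fun a b hab => hf hab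
  obtain ⟨h', hh⟩ := hAI.out (indMap R G H (flatMap R (↥H) f))
    (indMap_injective R G H hf')
    (indUp R G H (FlatMod R (↥H) X) (FlatMod R G I)
      ((flatRop R G H I).comp (flatMap R (↥H) g)))
  refine ⟨unflatMap R (↥H) ((ropFlat R G H I).comp
    (indDown R G H (FlatMod R (↥H) Y) (FlatMod R G I) h')), ?_⟩
  intro x
  show (indDown R G H (FlatMod R (↥H) Y) (FlatMod R G I) h') ((flatMap R (↥H) f) x)
      = (g x : Rop R G H I)
  show h' (Submodule.Quotient.mk ((1 : MonoidAlgebra R G) ⊗ₜ[R] ((flatMap R (↥H) f) x)))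
      = (g x : Rop R G H I)
  have e1 : (Submodule.Quotient.mk ((1 : MonoidAlgebra R G) ⊗ₜ[R] ((flatMap R (↥H) f) x))
        : Ind R G H (FlatMod R (↥H) Y))
      = indMap R G H (flatMap R (↥H) f)
          (Submodule.Quotient.mk ((1 : MonoidAlgebra R G) ⊗ₜ[R] x)) :=
    (indMap_mk R G H (flatMap R (↥H) f) 1 x).symm
  rw [e1, hh]
  have e2 := indUp_mk R G H (FlatMod R (↥H) X) (FlatMod R G I)
    ((flatRop R G H I).comp (flatMap R (↥H) g)) 1 x
  rw [e2, one_smul]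
  rfl

end RopInj
section RMod

variable (R : Type u) [CommRing R] (K : Type u) [Group K]

/-- A module over `R[K]`, equipped with its canonical `R`-structure (type synonym). -/
def RMod (R : Type u) [CommRing R] (K : Type u) [Group K] (X : Type u) : Type u := X

variable (X : Type u) [AddCommGroup X] [Module (MonoidAlgebra R K) X]

instance : AddCommGroup (RMod R K X) := inferInstanceAs (AddCommGroup X)

noncomputable instance : Module (MonoidAlgebra R K) (RMod R K X) :=
  inferInstanceAs (Module (MonoidAlgebra R K) X)

noncomputable instance : Module R (RMod R K X) :=
  Module.compHom X (algebraMap R (MonoidAlgebra R K))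

lemma rMod_smul_R (r : R) (x : RMod R K X) :
    r • x = ((algebraMap R (MonoidAlgebra R K) r) • (x : X) : X) := rfl

instance : IsScalarTower R (MonoidAlgebra R K) (RMod R K X) := by
  constructor
  intro r b x
  show (r • b) • (x : X) = (algebraMap R (MonoidAlgebra R K) r) • (b • (x : X))
  rw [Algebra.smul_def, mul_smul]

variable {X} {Y : Type u} [AddCommGroup Y] [Module (MonoidAlgebra R K) Y]

/-- A linear map, viewed on the `RMod` synonyms. -/
noncomputable def rModMap (f : X →ₗ[MonoidAlgebra R K] Y) : RMod R K X →ₗ[MonoidAlgebra R K] RMod R K Y where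
  toFun x := f x
  map_add' := map_add f
  map_smul' c x := f.map_smul c x

/-- The identity as a linear map `RMod X → X`. -/
def rModDownLin : RMod R K X →ₗ[MonoidAlgebra R K] X where
  toFun x := x
  map_add' _ _ := rfl
  map_smul' _ _ := rfl

end RMod

section Assemble

variable (R : Type u) [CommRing R] (G : Type u) [Group G] (H : Subgroup G)

/-- Exactness of `I ⊗ -` transfers along the comparison `thetaEquiv`. -/
lemma nct_exact_transfer
    {M N P : Type u} [AddCommGroup M] [Module R M] [Module (MonoidAlgebra R (↥H)) M]
    [IsScalarTower R (MonoidAlgebra R (↥H)) M]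
    [AddCommGroup N] [Module R N] [Module (MonoidAlgebra R (↥H)) N]
    [IsScalarTower R (MonoidAlgebra R (↥H)) N]
    [AddCommGroup P] [Module R P] [Module (MonoidAlgebra R (↥H)) P]
    [IsScalarTower R (MonoidAlgebra R (↥H)) P]
    (I : Type u) [AddCommGroup I] [Module (MonoidAlgebra R G)ᵐᵒᵖ I]
    {f : M →ₗ[MonoidAlgebra R (↥H)] N} {g : N →ₗ[MonoidAlgebra R (↥H)] P}
    (hex : Function.Exact (nctMap (MonoidAlgebra R (↥H)) (Rop R G H I) f)
      (nctMap (MonoidAlgebra R (↥H)) (Rop R G H I) g)) :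
    Function.Exact (nctMap (MonoidAlgebra R G) I (indMap R G H f))
      (nctMap (MonoidAlgebra R G) I (indMap R G H g)) := by
  have key := Function.Exact.of_ladder_addEquiv_of_exact
    (e₁ := thetaEquiv R G H I M) (e₂ := thetaEquiv R G H I N) (e₃ := thetaEquiv R G H I P)
    (f₁₂ := (nctMap (MonoidAlgebra R (↥H)) (Rop R G H I) f).toAddMonoidHom)
    (f₂₃ := (nctMap (MonoidAlgebra R (↥H)) (Rop R G H I) g).toAddMonoidHom)
    (g₁₂ := (nctMap (MonoidAlgebra R G) I (indMap R G H f)).toAddMonoidHom)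
    (g₂₃ := (nctMap (MonoidAlgebra R G) I (indMap R G H g)).toAddMonoidHom)
    (AddMonoidHom.ext fun t => theta_natural R G H I f t)
    (AddMonoidHom.ext fun t => theta_natural R G H I g t)
    (fun y => hex y)
  exact fun y => key y

variable (M : Type u) [AddCommGroup M] [Module R M] [Module (MonoidAlgebra R (↥H)) M]
  [IsScalarTower R (MonoidAlgebra R (↥H)) M]

/-- **Induction preserves PGF modules.** -/
theorem ind_isPGF (hM : IsPGF (MonoidAlgebra R (↥H)) M) :
    IsPGF (MonoidAlgebra R G) (Ind R G H M) := by
  obtain ⟨P, hproj, hex, hinj, ⟨e0⟩⟩ := hM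
  refine ⟨{ X := fun n => Ind R G H (RMod R (↥H) (P.X n))
            addX := fun n => inferInstance
            modX := fun n => inferInstance
            d := fun n => indMap R G H (rModMap R (↥H) (P.d n)) }, ?_, ?_, ?_, ?_⟩
  · intro n
    have hp : Module.Projective (MonoidAlgebra R (↥H)) (RMod R (↥H) (P.X n)) := hproj n
    exact ind_projective R G H (RMod R (↥H) (P.X n)) hp
  · intro n
    have he : Function.Exact (rModMap R (↥H) (P.d (n + 1))) (rModMap R (↥H) (P.d n)) :=
      fun y => hex n y
    exact indMap_exact R G H he
  · intro I _ _ hI n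
    have hIB : Module.Injective (MonoidAlgebra R (↥H))ᵐᵒᵖ (Rop R G H I) :=
      rop_injective R G H I hI
    have hB := hinj (Rop R G H I) hIB n
    have hB' : Function.Exact
        (nctMap (MonoidAlgebra R (↥H)) (Rop R G H I) (rModMap R (↥H) (P.d (n + 1))))
        (nctMap (MonoidAlgebra R (↥H)) (Rop R G H I) (rModMap R (↥H) (P.d n))) :=
      fun y => hB y
    exact nct_exact_transfer R G H I hB'
  · -- syzygy identification
    set s : P.X 1 →ₗ[MonoidAlgebra R (↥H)] M :=
      e0.toLinearMap.comp ((P.d 0).rangeRestrict) with hs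
    have hs_surj : Function.Surjective s := by
      apply Function.Surjective.comp e0.surjective
      exact (P.d 0).surjective_rangeRestrict
    set s' : RMod R (↥H) (P.X 1) →ₗ[MonoidAlgebra R (↥H)] M :=
      s.comp (rModDownLin R (↥H)) with hs'
    have hs'_surj : Function.Surjective s' := fun m => hs_surj m
    have hs_ker : ∀ y : P.X 1, s y = 0 ↔ (P.d 0) y = 0 := by
      intro y
      constructor
      · intro h
        have h2 : ((P.d 0).rangeRestrict y : LinearMap.range (P.d 0)) = 0 := by
          apply e0.injective
          simpa [hs] using h
        have h3 := congrArg (Subtype.val) h2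
        simpa using h3
      · intro h
        have h2 : (P.d 0).rangeRestrict y = 0 := by
          apply Subtype.ext
          simpa using h
        rw [hs]
        show e0 ((P.d 0).rangeRestrict y) = 0
        rw [h2, map_zero]
    have hs_exact : Function.Exact (rModMap R (↥H) (P.d 1)) s' := by
      intro y
      rw [show s' y = s y from rfl, hs_ker y]
      exact hex 0 y
    have hind_exact : Function.Exact (indMap R G H (rModMap R (↥H) (P.d 1)))
        (indMap R G H s') := indMap_exact R G H hs_exact
    have hq_exact : Function.Exact (indMap R G H (rModMap R (↥H) (P.d 1)))
        (indMap R G H (rModMap R (↥H) (P.d 0))) :=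
      indMap_exact R G H (fun y => hex 0 y)
    have hker : LinearMap.ker (indMap R G H (rModMap R (↥H) (P.d 0)))
        = LinearMap.ker (indMap R G H s') := by
      have hiff : ∀ z, (indMap R G H (rModMap R (↥H) (P.d 0))) z = 0
          ↔ (indMap R G H s') z = 0 := fun z => by rw [hq_exact z, hind_exact z]
      ext z
      simpa [LinearMap.mem_ker] using hiff z
    exact ⟨((LinearMap.quotKerEquivRange
        (indMap R G H (rModMap R (↥H) (P.d 0)))).symm.trans
      (Submodule.quotEquivOfEq _ _ hker)).trans
      (LinearMap.quotKerEquivOfSurjective _ (indMap_surjective R G H hs'_surj))⟩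

/-- **Induction does not raise the PGF dimension.** -/
theorem ind_pgfDim_le :
    pgfDim (MonoidAlgebra R G) (Ind R G H M) ≤ pgfDim (MonoidAlgebra R (↥H)) M := by
  unfold pgfDim classDim
  apply sInf_le_sInf
  rintro e ⟨n, rfl, ρ, hC, hzero⟩
  refine ⟨n, rfl, { F := fun i => Ind R G H (RMod R (↥H) (ρ.F i))
                    addF := fun i => inferInstance
                    modF := fun i => inferInstance
                    d := fun i => indMap R G H (rModMap R (↥H) (ρ.d i))
                    aug := indMap R G H (ρ.aug.comp (rModDownLin R (↥H)))
                    surj := indMap_surjective R G H (fun m => ρ.surj m)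
                    exact0 := indMap_exact R G H (fun y => ρ.exact0 y)
                    exact := fun i => indMap_exact R G H (fun y => ρ.exact i y) }, ?_, ?_⟩
  · intro i
    have h1 : IsPGF (MonoidAlgebra R (↥H)) (RMod R (↥H) (ρ.F i)) := hC i
    exact ind_isPGF R G H (RMod R (↥H) (ρ.F i)) h1
  · intro i hi x
    have h := ind_subsingleton R G H (M := RMod R (↥H) (ρ.F i))
    exact h (fun m => hzero i hi m) x

end Assemble

attribute [instance] instAddCommGroupInd instModuleMonoidAlgebraInd

/-- Induction from a subgroup `H ≤ G` sends PGF `R[H]`-modules to PGF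
`R[G]`-modules; consequently `PGF-dim_RG (Ind_H^G M) ≤ PGF-dim_RH M` for every `R[H]`-module
`M`. -/
theorem ind_pgf_and_pgfDim_le (R : Type u) [CommRing R] (G : Type u) [Group G]
    (H : Subgroup G) :
    (∀ (M : Type u) [AddCommGroup M] [Module R M] [Module (MonoidAlgebra R (↥H)) M]
      [IsScalarTower R (MonoidAlgebra R (↥H)) M],
      IsPGF (MonoidAlgebra R (↥H)) M → IsPGF (MonoidAlgebra R G) (Ind R G H M)) ∧
    (∀ (M : Type u) [AddCommGroup M] [Module R M] [Module (MonoidAlgebra R (↥H)) M]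
      [IsScalarTower R (MonoidAlgebra R (↥H)) M],
      pgfDim (MonoidAlgebra R G) (Ind R G H M) ≤ pgfDim (MonoidAlgebra R (↥H)) M) :=
  ⟨fun M _ _ _ _ hM => ind_isPGF R G H M hM, fun M _ _ _ _ => ind_pgfDim_le R G H M⟩
end
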